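/- arXiv:q-alg/9412003 — 5 statements merged into one kernel-verified Lean document; each statement's English description precedes it below -/
import Mathlib

section
/- In a braided quantum group, the coproduct of the unit satisfies φ(1) = 1 ⊗ 1. -/
open TensorProduct LinearMap

noncomputable section

variable (A : Type*) [Ring A] [Algebra ℂ A]

/-- Two-fold tensor product of `A` with itself. -/
abbrev T2 := A ⊗[ℂ] A
/-- Three-fold tensor product (right associated). -/
abbrev T3 := A ⊗[ℂ] (A ⊗[ℂ] A)
/-- Four-fold tensor product (right associated). -/
abbrev T4 := A ⊗[ℂ] (A ⊗[ℂ] (A ⊗[ℂ] A))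

variable {A}

/-- The multiplication of `A` as a linear map. -/
def mA : T2 A →ₗ[ℂ] A := LinearMap.mul' ℂ A

/-- `f ⊗ id` : a map of `T2` acting on the factors 1,2 of `T3`. -/
def op12 (f : T2 A →ₗ[ℂ] T2 A) : T3 A →ₗ[ℂ] T3 A :=
  (TensorProduct.assoc ℂ A A A).toLinearMap ∘ₗ f.rTensor A ∘ₗ
    (TensorProduct.assoc ℂ A A A).symm.toLinearMap

/-- `id ⊗ f` : a map of `T2` acting on the factors 2,3 of `T3`. -/
def op23 (f : T2 A →ₗ[ℂ] T2 A) : T3 A →ₗ[ℂ] T3 A := f.lTensor A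

/-- `f ⊗ id ⊗ id` : a map of `T2` acting on the factors 1,2 of `T4`. -/
def op12_4 (f : T2 A →ₗ[ℂ] T2 A) : T4 A →ₗ[ℂ] T4 A :=
  (TensorProduct.assoc ℂ A A (T2 A)).toLinearMap ∘ₗ f.rTensor (T2 A) ∘ₗ
    (TensorProduct.assoc ℂ A A (T2 A)).symm.toLinearMap

/-- `id ⊗ f ⊗ id` : a map of `T2` acting on the factors 2,3 of `T4`. -/
def op23_4 (f : T2 A →ₗ[ℂ] T2 A) : T4 A →ₗ[ℂ] T4 A := (op12 f).lTensor A

/-- `id ⊗ id ⊗ f` : a map of `T2` acting on the factors 3,4 of `T4`. -/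
def op34_4 (f : T2 A →ₗ[ℂ] T2 A) : T4 A →ₗ[ℂ] T4 A := (f.lTensor A).lTensor A

/-- `m ⊗ id : T3 → T2`. -/
def m12 : T3 A →ₗ[ℂ] T2 A :=
  (mA (A := A)).rTensor A ∘ₗ (TensorProduct.assoc ℂ A A A).symm.toLinearMap

/-- `id ⊗ m : T3 → T2`. -/
def m23 : T3 A →ₗ[ℂ] T2 A := (mA (A := A)).lTensor A

/-- `m ⊗ m : T4 → T2`. -/
def mm : T4 A →ₗ[ℂ] T2 A := m12 ∘ₗ ((mA (A := A)).lTensor A).lTensor A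

/-- A braided quantum group structure on the algebra `A` (Đurđević).
`φ` is the coproduct, `ε` the counit, `κ` the antipode, `σ` the braiding
(with given inverse `σ'`). -/
structure BQG (A : Type*) [Ring A] [Algebra ℂ A] where
  φ : A →ₗ[ℂ] T2 A
  ε : A →ₗ[ℂ] ℂ
  κ : A →ₗ[ℂ] A
  σ : T2 A →ₗ[ℂ] T2 A
  σ' : T2 A →ₗ[ℂ] T2 A
  σ_comp : σ ∘ₗ σ' = LinearMap.id
  comp_σ : σ' ∘ₗ σ = LinearMap.id
  κ_bij : Function.Bijective κ
  /-- coassociativity `(φ⊗id)φ = (id⊗φ)φ` -/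
  coassoc : (TensorProduct.assoc ℂ A A A).toLinearMap ∘ₗ φ.rTensor A ∘ₗ φ = φ.lTensor A ∘ₗ φ
  /-- `(ε⊗id)φ = id` -/
  counit_left : (TensorProduct.lid ℂ A).toLinearMap ∘ₗ ε.rTensor A ∘ₗ φ = LinearMap.id
  /-- `(id⊗ε)φ = id` -/
  counit_right : (TensorProduct.rid ℂ A).toLinearMap ∘ₗ ε.lTensor A ∘ₗ φ = LinearMap.id
  /-- `σ(m⊗id) = (id⊗m)(σ⊗id)(id⊗σ)` -/
  braid_mul_left : σ ∘ₗ m12 = m23 ∘ₗ op12 σ ∘ₗ op23 σ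
  /-- `σ(id⊗m) = (m⊗id)(id⊗σ)(σ⊗id)` -/
  braid_mul_right : σ ∘ₗ m23 = m12 ∘ₗ op23 σ ∘ₗ op12 σ
  /-- `φm = (m⊗m)(id⊗σ⊗id)(φ⊗φ)` -/
  comul_mul : φ ∘ₗ mA = mm ∘ₗ op23_4 σ ∘ₗ
      (TensorProduct.assoc ℂ A A (T2 A)).toLinearMap ∘ₗ φ.rTensor (T2 A) ∘ₗ φ.lTensor A
  /-- `(σ⊗id²)(id⊗φ⊗id)(σ⁻¹⊗id)(id⊗φ) = (id²⊗σ)(id⊗φ⊗id)(id⊗σ⁻¹)(φ⊗id)` -/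
  mixed_coassoc :
    op12_4 σ ∘ₗ ((TensorProduct.assoc ℂ A A A).toLinearMap ∘ₗ φ.rTensor A).lTensor A ∘ₗ
        op12 σ' ∘ₗ φ.lTensor A
      = op34_4 σ ∘ₗ ((TensorProduct.assoc ℂ A A A).toLinearMap ∘ₗ φ.rTensor A).lTensor A ∘ₗ
        op23 σ' ∘ₗ (TensorProduct.assoc ℂ A A A).toLinearMap ∘ₗ φ.rTensor A
  /-- `m(κ⊗id)φ = 1ε` -/
  antipode_left : mA ∘ₗ κ.rTensor A ∘ₗ φ = Algebra.linearMap ℂ A ∘ₗ ε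
  /-- `m(id⊗κ)φ = 1ε` -/
  antipode_right : mA ∘ₗ κ.lTensor A ∘ₗ φ = Algebra.linearMap ℂ A ∘ₗ ε

namespace BQG

variable {A : Type*} [Ring A] [Algebra ℂ A] (G : BQG A)

/-- `φ ⊗ id : T2 → T3`. -/
def φ1 : T2 A →ₗ[ℂ] T3 A := (TensorProduct.assoc ℂ A A A).toLinearMap ∘ₗ G.φ.rTensor A

/-- `id ⊗ φ : T2 → T3`. -/
def φ2 : T2 A →ₗ[ℂ] T3 A := G.φ.lTensor A

/-- `id² ⊗ ε : T3 → T2`. -/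
def ε3r : T3 A →ₗ[ℂ] T2 A :=
  ((TensorProduct.rid ℂ A).toLinearMap ∘ₗ G.ε.lTensor A).lTensor A

/-- `ε ⊗ id² : T3 → T2`. -/
def ε3l : T3 A →ₗ[ℂ] T2 A :=
  (TensorProduct.lid ℂ (T2 A)).toLinearMap ∘ₗ G.ε.rTensor (T2 A)

/-- The secondary braiding `τ = (id²⊗ε)(id⊗σ⁻¹)(φ⊗id)σ`. -/
def τ : T2 A →ₗ[ℂ] T2 A := G.ε3r ∘ₗ op23 G.σ' ∘ₗ G.φ1 ∘ₗ G.σ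

/-- `ε ⊗ ε : T2 → ℂ`. -/
def εε : T2 A →ₗ[ℂ] ℂ :=
  (TensorProduct.lid ℂ ℂ).toLinearMap ∘ₗ G.ε.rTensor ℂ ∘ₗ G.ε.lTensor A

end BQG


namespace BQGProof

set_option maxHeartbeats 1000000
set_option synthInstance.maxHeartbeats 400000

@[simp] lemma mA_tmul (a b : A) : (mA : T2 A →ₗ[ℂ] A) (a ⊗ₜ[ℂ] b) = a * b := by
  simp [mA]

@[simp] lemma m12_tmul (a b c : A) :
    (m12 : T3 A →ₗ[ℂ] T2 A) (a ⊗ₜ[ℂ] (b ⊗ₜ[ℂ] c)) = (a * b) ⊗ₜ[ℂ] c := by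
  simp [m12, mA]

@[simp] lemma m23_tmul (a b c : A) :
    (m23 : T3 A →ₗ[ℂ] T2 A) (a ⊗ₜ[ℂ] (b ⊗ₜ[ℂ] c)) = a ⊗ₜ[ℂ] (b * c) := by
  simp [m23, mA]

lemma op12_tmul (f : T2 A →ₗ[ℂ] T2 A) (a b c : A) :
    op12 f (a ⊗ₜ[ℂ] (b ⊗ₜ[ℂ] c)) = (TensorProduct.assoc ℂ A A A) (f (a ⊗ₜ[ℂ] b) ⊗ₜ[ℂ] c) := by
  simp [op12]

@[simp] lemma op23_tmul (f : T2 A →ₗ[ℂ] T2 A) (a : A) (t : T2 A) :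
    op23 f (a ⊗ₜ[ℂ] t) = a ⊗ₜ[ℂ] f t := by
  simp [op23]

@[simp] lemma op23_4_tmul (f : T2 A →ₗ[ℂ] T2 A) (a : A) (w : T3 A) :
    op23_4 f (a ⊗ₜ[ℂ] w) = a ⊗ₜ[ℂ] op12 f w := by
  simp [op23_4]

@[simp] lemma mm_tmul (a : A) (w : T3 A) :
    (mm : T4 A →ₗ[ℂ] T2 A) (a ⊗ₜ[ℂ] w) = m12 (a ⊗ₜ[ℂ] m23 w) := by
  simp [mm, m23]

lemma ext3 {M : Type*} [AddCommMonoid M] [Module ℂ M] {f g : T3 A →ₗ[ℂ] M}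
    (h : ∀ a b c : A, f (a ⊗ₜ[ℂ] (b ⊗ₜ[ℂ] c)) = g (a ⊗ₜ[ℂ] (b ⊗ₜ[ℂ] c))) : f = g := by
  apply TensorProduct.ext'
  intro a t
  induction t using TensorProduct.induction_on with
  | zero => simp only [TensorProduct.tmul_zero, TensorProduct.zero_tmul, map_zero]
  | tmul b c => exact h a b c
  | add t1 t2 h1 h2 => simp only [TensorProduct.tmul_add, map_add, h1, h2]

lemma ext4 {M : Type*} [AddCommMonoid M] [Module ℂ M] {f g : T4 A →ₗ[ℂ] M}
    (h : ∀ a b c d : A,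
      f (a ⊗ₜ[ℂ] (b ⊗ₜ[ℂ] (c ⊗ₜ[ℂ] d))) = g (a ⊗ₜ[ℂ] (b ⊗ₜ[ℂ] (c ⊗ₜ[ℂ] d)))) : f = g := by
  apply TensorProduct.ext'
  intro a t
  induction t using TensorProduct.induction_on with
  | zero => simp only [TensorProduct.tmul_zero, TensorProduct.zero_tmul, map_zero]
  | add t1 t2 h1 h2 => simp only [TensorProduct.tmul_add, map_add, h1, h2]
  | tmul b s =>
    induction s using TensorProduct.induction_on with
    | zero => simp only [TensorProduct.tmul_zero, TensorProduct.zero_tmul, map_zero]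
    | add s1 s2 h1 h2 => simp only [TensorProduct.tmul_add, map_add, h1, h2]
    | tmul c d => exact h a b c d

lemma m12_one (t : T2 A) : (m12 : T3 A →ₗ[ℂ] T2 A) ((1 : A) ⊗ₜ[ℂ] t) = t := by
  induction t using TensorProduct.induction_on with
  | zero => simp only [TensorProduct.tmul_zero, TensorProduct.zero_tmul, map_zero]
  | tmul b c => simp
  | add t1 t2 h1 h2 => simp only [TensorProduct.tmul_add, map_add, h1, h2]

variable (G : BQG A)

/-- `t ↦ 1 ⊗ t`. -/
def e : T2 A →ₗ[ℂ] T3 A := TensorProduct.mk ℂ A (A ⊗[ℂ] A) 1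

/-- `Q t = (id⊗m)(σ⊗id)(1⊗t)`; equals `id` by the braid relation. -/
def Q : T2 A →ₗ[ℂ] T2 A := m23 ∘ₗ op12 G.σ ∘ₗ e

lemma Q_comp_σ : Q G ∘ₗ G.σ = G.σ := by
  apply LinearMap.ext; intro t
  have hb := LinearMap.congr_fun G.braid_mul_left ((1 : A) ⊗ₜ[ℂ] t)
  simp only [comp_apply, op23_tmul, m12_one] at hb
  simpa [Q, e, comp_apply] using hb.symm

lemma Q_eq_id : Q G = LinearMap.id := by
  have h : (Q G ∘ₗ G.σ) ∘ₗ G.σ' = G.σ ∘ₗ G.σ' := by rw [Q_comp_σ]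
  rwa [LinearMap.comp_assoc, G.σ_comp, LinearMap.comp_id] at h

/-- `d ↦ d ⊗ φ(1)`. -/
def ρx : A →ₗ[ℂ] T3 A := (TensorProduct.mk ℂ A (A ⊗[ℂ] A)).flip (G.φ 1)

/-- `ψ d = (id⊗m)(σ⊗id)(d ⊗ φ(1))`. -/
def ψ : A →ₗ[ℂ] T2 A := m23 ∘ₗ op12 G.σ ∘ₗ ρx G

/-- Braided right multiplication by `φ(1)`. -/
def Rm : T2 A →ₗ[ℂ] T2 A := m12 ∘ₗ (ψ G).lTensor A

lemma ψ_one : ψ G 1 = G.φ 1 := by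
  have h := LinearMap.congr_fun (Q_eq_id G) (G.φ 1)
  simpa [ψ, ρx, Q, e, comp_apply] using h

lemma key (t : T2 A) :
    mm (op23_4 G.σ ((TensorProduct.assoc ℂ A A (A ⊗[ℂ] A)) (t ⊗ₜ[ℂ] G.φ 1))) = Rm G t := by
  induction t using TensorProduct.induction_on with
  | zero => simp only [TensorProduct.tmul_zero, TensorProduct.zero_tmul, map_zero]
  | tmul c d => simp [Rm, ψ, ρx, comp_apply]
  | add t1 t2 h1 h2 => simp only [TensorProduct.add_tmul, map_add, h1, h2]

lemma Rm_φ : Rm G ∘ₗ G.φ = G.φ := by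
  apply LinearMap.ext; intro a
  have h := LinearMap.congr_fun G.comul_mul (a ⊗ₜ[ℂ] (1 : A))
  simp only [comp_apply, mA_tmul, mul_one, lTensor_tmul, rTensor_tmul,
    LinearEquiv.coe_coe] at h
  rw [key] at h
  simpa [comp_apply] using h.symm

lemma m12_m12 (u c : A) (z : T2 A) :
    (m12 : T3 A →ₗ[ℂ] T2 A) (u ⊗ₜ[ℂ] m12 (c ⊗ₜ[ℂ] z)) = m12 ((u * c) ⊗ₜ[ℂ] z) := by
  induction z using TensorProduct.induction_on with
  | zero => simp only [TensorProduct.tmul_zero, TensorProduct.zero_tmul, map_zero]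
  | tmul p q => simp [mul_assoc]
  | add z1 z2 h1 h2 => simp only [TensorProduct.tmul_add, map_add, h1, h2]

lemma Rm_m12 : Rm G ∘ₗ m12 = m12 ∘ₗ (Rm G).lTensor A := by
  apply ext3; intro u c d
  simp only [comp_apply, m12_tmul, lTensor_tmul, Rm]
  rw [m12_m12]

/-- `a⊗(u⊗(v⊗w)) ↦ aκ(u) ⊗ (v⊗w)`. -/
def P : T4 A →ₗ[ℂ] T3 A :=
  (mA ∘ₗ G.κ.lTensor A).rTensor (A ⊗[ℂ] A) ∘ₗ
    (TensorProduct.assoc ℂ A A (A ⊗[ℂ] A)).symm.toLinearMap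

/-- `u⊗(v⊗w) ↦ κ(u)v ⊗ w`. -/
def F : T3 A →ₗ[ℂ] T2 A :=
  (mA ∘ₗ G.κ.rTensor A).rTensor A ∘ₗ (TensorProduct.assoc ℂ A A A).symm.toLinearMap

/-- `a⊗b ↦ Σ aκ(b₁) ⊗ (b₂⊗b₃)`. -/
def W : T2 A →ₗ[ℂ] T3 A := P G ∘ₗ (G.φ.lTensor A ∘ₗ G.φ).lTensor A

lemma m12_P : (m12 : T3 A →ₗ[ℂ] T2 A) ∘ₗ P G = m12 ∘ₗ (F G).lTensor A := by
  apply ext4; intro a u v w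
  simp [P, F, comp_apply, mul_assoc]

lemma F_φ : F G ∘ₗ (G.φ.lTensor A ∘ₗ G.φ) =
    (Algebra.linearMap ℂ A ∘ₗ G.ε).rTensor A ∘ₗ G.φ := by
  apply LinearMap.ext; intro b
  have hco := LinearMap.congr_fun G.coassoc b
  simp only [comp_apply, LinearEquiv.coe_coe] at hco ⊢
  rw [← hco]
  simp only [F, comp_apply, LinearEquiv.coe_coe, LinearEquiv.symm_apply_apply]
  rw [← LinearMap.rTensor_comp_apply, LinearMap.comp_assoc, G.antipode_left]

lemma E3 : (m12 : T3 A →ₗ[ℂ] T2 A) ∘ₗ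
    ((Algebra.linearMap ℂ A ∘ₗ G.ε).rTensor A ∘ₗ G.φ).lTensor A = LinearMap.id := by
  apply TensorProduct.ext'; intro a b
  have hc := LinearMap.congr_fun G.counit_left b
  simp only [comp_apply, LinearEquiv.coe_coe, id_apply] at hc
  have hkey : ∀ t : T2 A, (m12 : T3 A →ₗ[ℂ] T2 A)
      (a ⊗ₜ[ℂ] ((Algebra.linearMap ℂ A ∘ₗ G.ε).rTensor A t))
      = a ⊗ₜ[ℂ] ((TensorProduct.lid ℂ A) (G.ε.rTensor A t)) := by
    intro t
    induction t using TensorProduct.induction_on with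
    | zero => simp only [TensorProduct.tmul_zero, TensorProduct.zero_tmul, map_zero]
    | tmul u v =>
      simp [Algebra.algebraMap_eq_smul_one, mul_smul_comm,
        TensorProduct.smul_tmul, TensorProduct.tmul_smul]
    | add t1 t2 h1 h2 =>
      simp only [map_add, TensorProduct.tmul_add] at *
      rw [h1, h2]
  simp only [comp_apply, lTensor_tmul, id_apply]
  rw [hkey, hc]

lemma m12_W : (m12 : T3 A →ₗ[ℂ] T2 A) ∘ₗ W G = LinearMap.id := by
  rw [W, ← LinearMap.comp_assoc, m12_P, LinearMap.comp_assoc, ← LinearMap.lTensor_comp,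
    F_φ, E3]

lemma Rm_P : (Rm G).lTensor A ∘ₗ P G = P G ∘ₗ ((Rm G).lTensor A).lTensor A := by
  apply ext4; intro a u v w
  simp only [comp_apply, P, LinearEquiv.coe_coe, TensorProduct.assoc_symm_tmul,
    rTensor_tmul, lTensor_tmul, TensorProduct.assoc_symm_tmul]

lemma Rm_W : (Rm G).lTensor A ∘ₗ W G = W G := by
  rw [W, ← LinearMap.comp_assoc, Rm_P, LinearMap.comp_assoc, ← LinearMap.lTensor_comp]
  congr 1
  rw [← LinearMap.comp_assoc, ← LinearMap.lTensor_comp, Rm_φ]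

lemma Rm_id : Rm G = LinearMap.id := by
  have h1 := m12_W G
  calc Rm G = Rm G ∘ₗ (m12 ∘ₗ W G) := by rw [h1, LinearMap.comp_id]
    _ = (Rm G ∘ₗ m12) ∘ₗ W G := by rw [LinearMap.comp_assoc]
    _ = (m12 ∘ₗ (Rm G).lTensor A) ∘ₗ W G := by rw [Rm_m12]
    _ = m12 ∘ₗ ((Rm G).lTensor A ∘ₗ W G) := by rw [LinearMap.comp_assoc]
    _ = m12 ∘ₗ W G := by rw [Rm_W]
    _ = LinearMap.id := h1

end BQGProof

/-- In a braided quantum group, `φ(1) = 1 ⊗ 1`. -/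
theorem bqg_comul_one {A : Type*} [Ring A] [Algebra ℂ A] (G : BQG A) :
    G.φ 1 = (1 : A) ⊗ₜ[ℂ] (1 : A) := by
  have h := LinearMap.congr_fun (BQGProof.Rm_id G) ((1 : A) ⊗ₜ[ℂ] (1 : A))
  simp only [LinearMap.id_apply] at h
  calc G.φ 1 = m12 ((1 : A) ⊗ₜ[ℂ] G.φ 1) := (BQGProof.m12_one _).symm
    _ = m12 ((1 : A) ⊗ₜ[ℂ] BQGProof.ψ G 1) := by rw [BQGProof.ψ_one]
    _ = BQGProof.Rm G ((1 : A) ⊗ₜ[ℂ] (1 : A)) := by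
        simp [BQGProof.Rm, LinearMap.comp_apply]
    _ = (1 : A) ⊗ₜ[ℂ] (1 : A) := h
end
end

section
/- In a braided quantum group, the braiding σ is expressible through the coproduct, multiplication and antipode: σ = (m⊗m)(κ⊗φm⊗κ)(φ⊗φ). -/
open TensorProduct LinearMap

noncomputable section

variable (A : Type*) [Ring A] [Algebra ℂ A]

variable {A}

/-! ### Auxiliary machinery for the braiding formula -/

section BraidingFormulaProof
set_option synthInstance.maxHeartbeats 1000000
set_option maxHeartbeats 1000000

variable {A : Type*} [Ring A] [Algebra ℂ A]

/-- Reassociation `(A⊗A)⊗(A⊗A) → A⊗((A⊗A)⊗A)`. -/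
def jmap : (T2 A) ⊗[ℂ] (T2 A) →ₗ[ℂ] A ⊗[ℂ] ((T2 A) ⊗[ℂ] A) :=
  ((TensorProduct.assoc ℂ A A A).symm.toLinearMap.lTensor A) ∘ₗ
    (TensorProduct.assoc ℂ A A (T2 A)).toLinearMap

/-- Reassociation `A⊗((A⊗A)⊗A) → (A⊗A)⊗(A⊗A)`. -/
def jinv : A ⊗[ℂ] ((T2 A) ⊗[ℂ] A) →ₗ[ℂ] (T2 A) ⊗[ℂ] (T2 A) :=
  (TensorProduct.assoc ℂ A A (T2 A)).symm.toLinearMap ∘ₗ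
    ((TensorProduct.assoc ℂ A A A).toLinearMap.lTensor A)

/-- `(p⊗x)⊗(y⊗q) ↦ p·σ¹(x⊗y) ⊗ σ²(x⊗y)·q`. -/
def K2 (G : BQG A) : (T2 A) ⊗[ℂ] (T2 A) →ₗ[ℂ] T2 A :=
  TensorProduct.map mA mA ∘ₗ jinv ∘ₗ (G.σ.rTensor A).lTensor A ∘ₗ jmap

def D1 (G : BQG A) : T3 A →ₗ[ℂ] T2 A := m12 ∘ₗ G.κ.rTensor (T2 A)

def D2 (G : BQG A) : T3 A →ₗ[ℂ] T2 A := m23 ∘ₗ (G.κ.lTensor A).lTensor A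

def Kmap (G : BQG A) : (T3 A) ⊗[ℂ] (T3 A) →ₗ[ℂ] T2 A :=
  K2 G ∘ₗ TensorProduct.map (D1 G) (D2 G)

@[simp] lemma mA_tmul (x y : A) : (mA (A := A)) (x ⊗ₜ[ℂ] y) = x * y :=
  LinearMap.mul'_apply

@[simp] lemma m12_tmul (x y z : A) :
    (m12 (A := A)) (x ⊗ₜ[ℂ] (y ⊗ₜ[ℂ] z)) = (x * y) ⊗ₜ[ℂ] z := by
  simp [m12]

@[simp] lemma m23_tmul (x y z : A) :
    (m23 (A := A)) (x ⊗ₜ[ℂ] (y ⊗ₜ[ℂ] z)) = x ⊗ₜ[ℂ] (y * z) := by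
  simp [m23]

@[simp] lemma mm_tmul (x y z w : A) :
    (mm (A := A)) (x ⊗ₜ[ℂ] (y ⊗ₜ[ℂ] (z ⊗ₜ[ℂ] w))) = (x * y) ⊗ₜ[ℂ] (z * w) := by
  simp [mm]

lemma op12_tmul (f : T2 A →ₗ[ℂ] T2 A) (x y z : A) :
    op12 f (x ⊗ₜ[ℂ] (y ⊗ₜ[ℂ] z)) =
      (TensorProduct.assoc ℂ A A A) (f (x ⊗ₜ[ℂ] y) ⊗ₜ[ℂ] z) := by
  simp [op12]

lemma op23_4_tmul (f : T2 A →ₗ[ℂ] T2 A) (x : A) (w : T3 A) :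
    op23_4 f (x ⊗ₜ[ℂ] w) = x ⊗ₜ[ℂ] (op12 f w) := by
  simp [op23_4]

lemma mm_mid (x y : A) (s : T2 A) :
    (mm (A := A)) (x ⊗ₜ[ℂ] ((TensorProduct.assoc ℂ A A A) (s ⊗ₜ[ℂ] y))) =
      TensorProduct.map (LinearMap.mulLeft ℂ x) (LinearMap.mulRight ℂ y) s := by
  induction s using TensorProduct.induction_on with
  | zero => simp
  | tmul a b => simp
  | add s t hs ht =>
      simp only [add_tmul, map_add, tmul_add] at *
      rw [hs, ht]

lemma K2_apply (G : BQG A) (p x y q : A) :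
    K2 G ((p ⊗ₜ[ℂ] x) ⊗ₜ[ℂ] (y ⊗ₜ[ℂ] q)) =
      TensorProduct.map (LinearMap.mulLeft ℂ p) (LinearMap.mulRight ℂ q)
        (G.σ (x ⊗ₜ[ℂ] y)) := by
  simp only [K2, jmap, jinv, LinearMap.comp_apply, LinearEquiv.coe_coe,
    TensorProduct.assoc_tmul, LinearMap.lTensor_tmul, TensorProduct.assoc_symm_tmul,
    LinearMap.rTensor_tmul]
  generalize G.σ (x ⊗ₜ[ℂ] y) = s
  induction s using TensorProduct.induction_on with
  | zero => simp
  | tmul a b => simp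
  | add s t hs ht =>
      simp only [add_tmul, map_add, tmul_add] at *
      rw [hs, ht]

lemma lemA (G : BQG A) :
    mm ∘ₗ G.κ.rTensor (A ⊗[ℂ] T2 A) ∘ₗ op23_4 (G.φ ∘ₗ mA) ∘ₗ
        ((G.κ.lTensor A).lTensor A).lTensor A ∘ₗ
        (TensorProduct.assoc ℂ A A (T2 A)).toLinearMap
      = Kmap G ∘ₗ TensorProduct.map (G.φ.lTensor A)
          ((TensorProduct.assoc ℂ A A A).toLinearMap ∘ₗ G.φ.rTensor A) := by
  rw [G.comul_mul]
  apply TensorProduct.ext'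
  intro x y
  induction x using TensorProduct.induction_on with
  | zero => simp
  | add x x' hx hx' => simp only [add_tmul, map_add, hx, hx']
  | tmul a1 a2 =>
    induction y using TensorProduct.induction_on with
    | zero => simp
    | add y y' hy hy' => simp only [tmul_add, map_add, hy, hy']
    | tmul b1 b2 =>
      simp only [LinearMap.comp_apply, LinearEquiv.coe_coe, TensorProduct.assoc_tmul,
        LinearMap.lTensor_tmul, LinearMap.rTensor_tmul, TensorProduct.map_tmul,
        op23_4_tmul, op12_tmul, Kmap, D1, D2, mm_mid]
      generalize G.φ a2 = e1
      generalize G.φ b1 = e2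
      induction e1 using TensorProduct.induction_on with
      | zero => simp
      | add e e' he he' => simp only [add_tmul, tmul_add, map_add, he, he']
      | tmul x1 x2 =>
        induction e2 using TensorProduct.induction_on with
        | zero => simp
        | add e e' he he' => simp only [add_tmul, tmul_add, map_add, he, he']
        | tmul y1 y2 =>
          simp only [TensorProduct.assoc_tmul, op23_4_tmul, op12_tmul, mm_mid,
            m12_tmul, m23_tmul, LinearMap.lTensor_tmul, LinearEquiv.coe_coe,
            K2_apply]
          rw [LinearMap.mulLeft_mul, LinearMap.mulRight_mul, TensorProduct.map_comp,
            LinearMap.comp_apply]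

lemma lemB (G : BQG A) :
    Kmap G ∘ₗ TensorProduct.map
        ((TensorProduct.assoc ℂ A A A).toLinearMap ∘ₗ G.φ.rTensor A) (G.φ.lTensor A)
      = K2 G ∘ₗ TensorProduct.map ((mA ∘ₗ G.κ.rTensor A ∘ₗ G.φ).rTensor A)
          ((mA ∘ₗ G.κ.lTensor A ∘ₗ G.φ).lTensor A) := by
  apply TensorProduct.ext'
  intro x y
  induction x using TensorProduct.induction_on with
  | zero => simp
  | add x x' hx hx' => simp only [add_tmul, map_add, hx, hx']
  | tmul a1 a2 =>
    induction y using TensorProduct.induction_on with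
    | zero => simp
    | add y y' hy hy' => simp only [tmul_add, map_add, hy, hy']
    | tmul b1 b2 =>
      simp only [LinearMap.comp_apply, LinearEquiv.coe_coe, TensorProduct.map_tmul,
        LinearMap.rTensor_tmul, LinearMap.lTensor_tmul, Kmap, D1, D2]
      generalize G.φ a1 = e1
      generalize G.φ b2 = e2
      induction e1 using TensorProduct.induction_on with
      | zero => simp
      | add e e' he he' => simp only [add_tmul, tmul_add, map_add, he, he']
      | tmul x1 x2 =>
        induction e2 using TensorProduct.induction_on with
        | zero => simp
        | add e e' he he' => simp only [add_tmul, tmul_add, map_add, he, he']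
        | tmul y1 y2 =>
          simp only [TensorProduct.assoc_tmul, LinearMap.rTensor_tmul,
            LinearMap.lTensor_tmul, LinearEquiv.coe_coe, m12_tmul, m23_tmul,
            LinearMap.comp_apply, mA_tmul]

lemma lemC (G : BQG A) :
    K2 G ∘ₗ TensorProduct.map ((Algebra.linearMap ℂ A ∘ₗ G.ε).rTensor A)
        ((Algebra.linearMap ℂ A ∘ₗ G.ε).lTensor A)
      = G.σ ∘ₗ TensorProduct.map
          ((TensorProduct.lid ℂ A).toLinearMap ∘ₗ G.ε.rTensor A)
          ((TensorProduct.rid ℂ A).toLinearMap ∘ₗ G.ε.lTensor A) := by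
  apply TensorProduct.ext'
  intro x y
  induction x using TensorProduct.induction_on with
  | zero => simp
  | add x x' hx hx' => simp only [add_tmul, map_add, hx, hx']
  | tmul a1 a2 =>
    induction y using TensorProduct.induction_on with
    | zero => simp
    | add y y' hy hy' => simp only [tmul_add, map_add, hy, hy']
    | tmul b1 b2 =>
      simp only [LinearMap.comp_apply, LinearEquiv.coe_coe, TensorProduct.map_tmul,
        LinearMap.rTensor_tmul, LinearMap.lTensor_tmul, TensorProduct.lid_tmul,
        TensorProduct.rid_tmul, K2_apply, Algebra.linearMap_apply]
      simp only [tmul_smul, ← smul_tmul', map_smul]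
      generalize G.σ (a2 ⊗ₜ[ℂ] b1) = s
      induction s using TensorProduct.induction_on with
      | zero => simp
      | add s t hs ht => simp only [map_add, smul_add, hs, ht]
      | tmul s1 s2 =>
        simp only [TensorProduct.map_tmul, LinearMap.mulLeft_apply,
          LinearMap.mulRight_apply]
        rw [← Algebra.commutes, ← Algebra.smul_def, ← Algebra.smul_def]
        simp only [tmul_smul, ← smul_tmul']

end BraidingFormulaProof

set_option maxHeartbeats 1000000 in
set_option synthInstance.maxHeartbeats 1000000 in
/-- The braiding is expressible through the coproduct, multiplication and antipode:
`σ = (m⊗m)(κ⊗φm⊗κ)(φ⊗φ)`. -/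
theorem bqg_braiding_formula {A : Type*} [Ring A] [Algebra ℂ A] (G : BQG A) :
    G.σ = mm ∘ₗ G.κ.rTensor (A ⊗[ℂ] T2 A) ∘ₗ op23_4 (G.φ ∘ₗ mA) ∘ₗ
      ((G.κ.lTensor A).lTensor A).lTensor A ∘ₗ
      (TensorProduct.assoc ℂ A A (T2 A)).toLinearMap ∘ₗ G.φ.rTensor (T2 A) ∘ₗ
      G.φ.lTensor A := by
  apply TensorProduct.ext'
  intro a b
  have HA := LinearMap.congr_fun (lemA G) (G.φ a ⊗ₜ[ℂ] G.φ b)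
  have hB := lemB G
  rw [G.antipode_left, G.antipode_right] at hB
  have HB := LinearMap.congr_fun hB (G.φ a ⊗ₜ[ℂ] G.φ b)
  have HC := LinearMap.congr_fun (lemC G) (G.φ a ⊗ₜ[ℂ] G.φ b)
  have hca := LinearMap.congr_fun G.coassoc a
  have hcb := LinearMap.congr_fun G.coassoc b
  have hl := LinearMap.congr_fun G.counit_left a
  have hr := LinearMap.congr_fun G.counit_right b
  simp only [LinearMap.comp_apply, TensorProduct.map_tmul, LinearEquiv.coe_coe,
    LinearMap.lTensor_tmul, LinearMap.rTensor_tmul, LinearMap.id_apply]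
    at HA HB HC hca hcb hl hr ⊢
  rw [HA, ← hca, hcb, HB, HC, hl, hr]
end
end

section
/- In a braided quantum group, the identity (ε⊗id) = (id⊗εm)(σ⊗id)(id⊗φ) holds; equivalently, for all a,b ∈ A: a·ε(b) = (ε⊗id)(a⁽¹⁾σ(a⁽²⁾⊗b)), where φ(a) = a⁽¹⁾⊗a⁽²⁾ in Sweedler notation. -/
open TensorProduct LinearMap

noncomputable section

variable (A : Type*) [Ring A] [Algebra ℂ A]

variable {A}

/-!
Write `R` for the right-hand side. Applying `id ⊗ ε` to `φ(ab) = (m⊗m)(id⊗σ⊗id)(φa ⊗ φb)` and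
using the counit law gives `a⁽¹⁾ R(a⁽²⁾ ⊗ b) = ab`: in the convolution algebra of linear maps
`A → A`, `id * R(· ⊗ b)` is right multiplication by `b`. Since `κ * id = 1` by the antipode law,
convolving with `κ` on the left gives `R(a ⊗ b) = κ(a⁽¹⁾) a⁽²⁾ b = ε(a) b`.
-/

open Coalgebra WithConv

namespace LinearMap

variable {R C A : Type*} [CommSemiring R] [Semiring A] [Algebra R A]

lemma convMul_mulRight_comp [AddCommMonoid C] [Module R C] [CoalgebraStruct R C]
    (f g : C →ₗ[R] A) (b : A) :
    toConv f * toConv (mulRight R b ∘ₗ g) =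
      toConv (mulRight R b ∘ₗ (toConv f * toConv g).ofConv) := by
  ext c
  simp [(ℛ R c).convMul_apply, mul_assoc]

theorem apply_eq_counit_smul_of_id_convMul_eq_mulRight [Coalgebra R A] {κ r : A →ₗ[R] A} {b : A}
    (hκ : toConv κ * toConv LinearMap.id = 1)
    (hr : toConv LinearMap.id * toConv r = toConv (mulRight R b)) (a : A) :
    r a = counit (R := R) a • b := by
  have hr' : toConv r = toConv (mulRight R b ∘ₗ (1 : WithConv (A →ₗ[R] A)).ofConv) :=
    calc toConv r = toConv κ * toConv LinearMap.id * toConv r := by rw [hκ, one_mul]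
      _ = toConv κ * toConv (mulRight R b ∘ₗ LinearMap.id) := by rw [mul_assoc, hr]; rfl
      _ = _ := by rw [convMul_mulRight_comp, hκ]
  simpa [Algebra.smul_def] using LinearMap.congr_fun (congrArg ofConv hr') a

end LinearMap

lemma rid_comp_lTensor_comp_mm {A : Type*} [Ring A] [Algebra ℂ A] (f : A →ₗ[ℂ] ℂ) :
    ((TensorProduct.rid ℂ A).toLinearMap ∘ₗ f.lTensor A) ∘ₗ mm
      = mA ∘ₗ ((TensorProduct.rid ℂ A).toLinearMap ∘ₗ (f ∘ₗ mA).lTensor A).lTensor A := by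
  ext a b c d
  simp [mA, mm, m12]

namespace BQG

variable {A : Type*} [Ring A] [Algebra ℂ A] (G : BQG A)

abbrev toCoalgebra : Coalgebra ℂ A where
  comul := G.φ
  counit := G.ε
  coassoc := G.coassoc
  rTensor_counit_comp_comul := by
    ext a
    simpa using congrArg (TensorProduct.lid ℂ A).symm (LinearMap.congr_fun G.counit_left a)
  lTensor_counit_comp_comul := by
    ext a
    simpa using congrArg (TensorProduct.rid ℂ A).symm (LinearMap.congr_fun G.counit_right a)

def counitMulBraid : T3 A →ₗ[ℂ] A :=
  (TensorProduct.rid ℂ A).toLinearMap ∘ₗ (G.ε ∘ₗ mA).lTensor A ∘ₗ op12 G.σ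

lemma mA_eq_mA_comp_lTensor_counitMulBraid :
    mA = mA ∘ₗ G.counitMulBraid.lTensor A ∘ₗ (TensorProduct.assoc ℂ A A (T2 A)).toLinearMap ∘ₗ
      G.φ.rTensor (T2 A) ∘ₗ G.φ.lTensor A :=
  calc mA = ((TensorProduct.rid ℂ A).toLinearMap ∘ₗ G.ε.lTensor A ∘ₗ G.φ) ∘ₗ mA := by
        rw [G.counit_right, LinearMap.id_comp]
    _ = ((TensorProduct.rid ℂ A).toLinearMap ∘ₗ G.ε.lTensor A) ∘ₗ mm ∘ₗ op23_4 G.σ ∘ₗ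
          (TensorProduct.assoc ℂ A A (T2 A)).toLinearMap ∘ₗ G.φ.rTensor (T2 A) ∘ₗ
          G.φ.lTensor A := by
        simp only [LinearMap.comp_assoc, G.comul_mul]
    _ = _ := by
        simp only [← LinearMap.comp_assoc, rid_comp_lTensor_comp_mm]
        simp only [counitMulBraid, op23_4, LinearMap.lTensor_comp, LinearMap.comp_assoc]

lemma mA_lTensor_comul_eq_mul (a b : A) :
    mA ((G.counitMulBraid ∘ₗ G.φ2 ∘ₗ (TensorProduct.mk ℂ A A).flip b).lTensor A (G.φ a)) =
      a * b := by
  calc _ = mA (G.counitMulBraid.lTensor A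
          (TensorProduct.assoc ℂ A A (T2 A) (G.φ a ⊗ₜ G.φ b))) := by
        induction G.φ a using TensorProduct.induction_on with
        | zero => simp
        | tmul x y => simp [φ2]
        | add x y hx hy => simp [map_add, TensorProduct.add_tmul, hx, hy]
    _ = mA (a ⊗ₜ b) := by
        conv_rhs => rw [G.mA_eq_mA_comp_lTensor_counitMulBraid]
        rfl
    _ = a * b := LinearMap.mul'_apply

end BQG

/-- `(ε⊗id) = (id⊗εm)(σ⊗id)(id⊗φ)`. -/
theorem bqg_counit_sigma_left {A : Type*} [Ring A] [Algebra ℂ A] (G : BQG A) :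
    (TensorProduct.lid ℂ A).toLinearMap ∘ₗ G.ε.rTensor A
      = (TensorProduct.rid ℂ A).toLinearMap ∘ₗ (G.ε ∘ₗ mA).lTensor A ∘ₗ
        op12 G.σ ∘ₗ G.φ2 := by
  let _ := G.toCoalgebra
  refine TensorProduct.ext' fun a b ↦ ?_
  have hκ : toConv G.κ * toConv LinearMap.id = 1 := congrArg toConv G.antipode_left
  have hr : toConv LinearMap.id * toConv (G.counitMulBraid ∘ₗ G.φ2 ∘ₗ
      (TensorProduct.mk ℂ A A).flip b) = toConv (mulRight ℂ b) := by
    ext a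
    exact G.mA_lTensor_comul_eq_mul a b
  exact (LinearMap.apply_eq_counit_smul_of_id_convMul_eq_mulRight hκ hr a).symm
end
end

section
/- In a braided quantum group, the identity (id⊗ε) = (εm⊗id)(id⊗σ)(φ⊗id) holds; equivalently, for all a,b ∈ A: ε(a)·b = (id⊗ε)(σ(a⊗b⁽¹⁾)·b⁽²⁾). -/
open TensorProduct LinearMap

noncomputable section

variable (A : Type*) [Ring A] [Algebra ℂ A]

variable {A}

namespace BQGAux

set_option maxHeartbeats 1000000
set_option synthInstance.maxHeartbeats 400000

variable {A : Type*} [Ring A] [Algebra ℂ A] (G : BQG A)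

/-- The RHS map of the target theorem. -/
def Frhs : T2 A →ₗ[ℂ] A :=
  (TensorProduct.lid ℂ A).toLinearMap ∘ₗ (G.ε ∘ₗ mA).rTensor A ∘ₗ
    (TensorProduct.assoc ℂ A A A).symm.toLinearMap ∘ₗ op23 G.σ ∘ₗ G.φ1

/-- The LHS map of the target theorem. -/
def Glhs : T2 A →ₗ[ℂ] A :=
  (TensorProduct.rid ℂ A).toLinearMap ∘ₗ G.ε.lTensor A

/-- Convolution with the identity in the second leg. -/
def Ψ (H : T2 A →ₗ[ℂ] A) : T2 A →ₗ[ℂ] A :=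
  mA ∘ₗ H.rTensor A ∘ₗ (TensorProduct.assoc ℂ A A A).symm.toLinearMap ∘ₗ G.φ.lTensor A

lemma counit_left_apply (x : A) :
    (TensorProduct.lid ℂ A) (G.ε.rTensor A (G.φ x)) = x := by
  simpa using LinearMap.congr_fun G.counit_left x

lemma counit_right_apply (x : A) :
    (TensorProduct.rid ℂ A) (G.ε.lTensor A (G.φ x)) = x := by
  simpa using LinearMap.congr_fun G.counit_right x

lemma antipode_right_apply (x : A) :
    mA (G.κ.lTensor A (G.φ x)) = algebraMap ℂ A (G.ε x) := by
  simpa using LinearMap.congr_fun G.antipode_right x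

lemma coassoc_apply (x : A) :
    G.φ.rTensor A (G.φ x) =
      (TensorProduct.assoc ℂ A A A).symm (G.φ.lTensor A (G.φ x)) := by
  have h := LinearMap.congr_fun G.coassoc x
  simp only [LinearMap.comp_apply, LinearEquiv.coe_coe] at h
  rw [← h, LinearEquiv.symm_apply_apply]

/-- `Ψ Glhs = m`. -/
lemma Ψ_Glhs : Ψ G (Glhs G) = mA := by
  apply TensorProduct.ext'
  intro a b
  have key : ∀ u : T2 A,
      mA ((Glhs G).rTensor A ((TensorProduct.assoc ℂ A A A).symm (a ⊗ₜ u)))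
        = a * (TensorProduct.lid ℂ A) (G.ε.rTensor A u) := by
    intro u
    induction u using TensorProduct.induction_on with
    | zero => simp
    | tmul c d =>
        simp [Glhs, mA, mul_smul_comm, smul_mul_assoc]
    | add x y hx hy =>
        simp only [tmul_add, map_add, mul_add] at hx hy ⊢
        rw [hx, hy]
  simp only [Ψ, LinearMap.comp_apply, LinearMap.lTensor_tmul, LinearEquiv.coe_coe,
    LinearMap.id_apply]
  rw [key (G.φ b), counit_left_apply]
  simp [mA]

/-- `Ψ Frhs = m` (this is where comultiplicativity of `φ` enters). -/
lemma Ψ_Frhs : Ψ G (Frhs G) = mA := by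
  apply TensorProduct.ext'
  intro a b
  have hc := LinearMap.congr_fun G.comul_mul (a ⊗ₜ[ℂ] b)
  simp only [LinearMap.comp_apply, LinearMap.lTensor_tmul, mA, LinearMap.mul'_apply,
    LinearEquiv.coe_coe, LinearMap.rTensor_tmul] at hc
  have key : ∀ u : T2 A,
      mA ((Frhs G).rTensor A ((TensorProduct.assoc ℂ A A A).symm (a ⊗ₜ u)))
        = (TensorProduct.lid ℂ A) (G.ε.rTensor A
            (mm (op23_4 G.σ ((TensorProduct.assoc ℂ A A (T2 A))
              (G.φ.rTensor (T2 A) (a ⊗ₜ u)))))) := by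
    intro u
    induction u using TensorProduct.induction_on with
    | zero => simp
    | tmul c d =>
        simp only [Frhs, BQG.φ1, op23, op23_4, op12, mm, m12, m23, mA,
          LinearMap.comp_apply, LinearEquiv.coe_coe, LinearMap.rTensor_tmul,
          LinearMap.lTensor_tmul, assoc_tmul, assoc_symm_tmul, lid_tmul,
          LinearMap.mul'_apply]
        generalize G.φ a = t
        induction t using TensorProduct.induction_on with
        | zero => simp
        | tmul p q =>
            simp only [op12, LinearMap.comp_apply, LinearEquiv.coe_coe,
              LinearMap.rTensor_tmul, assoc_symm_tmul, assoc_tmul,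
              LinearMap.lTensor_tmul]
            generalize G.σ (q ⊗ₜ c) = w
            induction w using TensorProduct.induction_on with
            | zero => simp
            | tmul x y =>
                simp only [LinearMap.rTensor_tmul, assoc_symm_tmul, assoc_tmul,
                  LinearMap.lTensor_tmul, lid_tmul, LinearMap.mul'_apply,
                  LinearMap.comp_apply, LinearEquiv.coe_coe]
                rw [smul_mul_assoc]
            | add x y hx hy =>
                simp only [add_tmul, tmul_add, map_add, add_mul, mul_add] at hx hy ⊢
                rw [hx, hy]
        | add x y hx hy =>
            simp only [add_tmul, tmul_add, map_add, add_mul, mul_add] at hx hy ⊢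
            rw [hx, hy]
    | add x y hx hy =>
        simp only [add_tmul, tmul_add, map_add, mul_add] at hx hy ⊢
        rw [hx, hy]
  simp only [Ψ, LinearMap.comp_apply, LinearMap.lTensor_tmul, LinearEquiv.coe_coe,
    LinearMap.id_apply]
  rw [key (G.φ b)]
  simp only [LinearMap.rTensor_tmul]
  rw [← hc, counit_left_apply]
  simp [mA]

/-- The antipode cancels `Ψ`: for every `H`, one recovers `H` from `Ψ H`. -/
lemma cancel (H : T2 A →ₗ[ℂ] A) (a b : A) :
    mA ((Ψ G H).rTensor A ((TensorProduct.assoc ℂ A A A).symm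
        (a ⊗ₜ (G.κ.lTensor A (G.φ b))))) = H (a ⊗ₜ b) := by
  classical
  set Ka : T2 A →ₗ[ℂ] A :=
    mA ∘ₗ H.rTensor A ∘ₗ (TensorProduct.assoc ℂ A A A).symm.toLinearMap ∘ₗ
      TensorProduct.mk ℂ A (T2 A) a with hKa
  set Lfun : T2 A ⊗[ℂ] A →ₗ[ℂ] A := mA ∘ₗ TensorProduct.map Ka G.κ with hL
  set Mfun : T2 A →ₗ[ℂ] A :=
    mA ∘ₗ TensorProduct.map (H ∘ₗ TensorProduct.mk ℂ A A a)
      (Algebra.linearMap ℂ A ∘ₗ G.ε) with hM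
  have C1 : ∀ u : T2 A,
      mA ((Ψ G H).rTensor A ((TensorProduct.assoc ℂ A A A).symm
          (a ⊗ₜ (G.κ.lTensor A u)))) = Lfun (G.φ.rTensor A u) := by
    intro u
    induction u using TensorProduct.induction_on with
    | zero => simp
    | tmul c d =>
        simp [hL, hKa, Ψ, mA, TensorProduct.mk_apply]
    | add x y hx hy =>
        simp only [tmul_add, map_add] at hx hy ⊢
        rw [hx, hy]
  have C2' : ∀ (c : A) (t : T2 A),
      Lfun ((TensorProduct.assoc ℂ A A A).symm (c ⊗ₜ t))
        = H (a ⊗ₜ c) * mA (G.κ.lTensor A t) := by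
    intro c t
    induction t using TensorProduct.induction_on with
    | zero => simp
    | tmul e f =>
        simp [hL, hKa, mA, mul_assoc, TensorProduct.mk_apply]
    | add x y hx hy =>
        simp only [tmul_add, map_add, mul_add] at hx hy ⊢
        rw [hx, hy]
  have C2 : ∀ u : T2 A,
      Lfun ((TensorProduct.assoc ℂ A A A).symm (G.φ.lTensor A u)) = Mfun u := by
    intro u
    induction u using TensorProduct.induction_on with
    | zero => simp
    | tmul c d =>
        simp only [LinearMap.lTensor_tmul]
        rw [C2' c (G.φ d), antipode_right_apply]
        simp [hM, mA, TensorProduct.mk_apply]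
    | add x y hx hy =>
        simp only [tmul_add, map_add] at hx hy ⊢
        rw [hx, hy]
  have C3 : ∀ u : T2 A,
      Mfun u = H (a ⊗ₜ ((TensorProduct.rid ℂ A) (G.ε.lTensor A u))) := by
    intro u
    induction u using TensorProduct.induction_on with
    | zero => simp
    | tmul c d =>
        simp [hM, mA, Algebra.algebraMap_eq_smul_one, mul_smul_comm, tmul_smul,
          TensorProduct.mk_apply]
    | add x y hx hy =>
        simp only [tmul_add, map_add] at hx hy ⊢
        rw [hx, hy]
  rw [C1 (G.φ b), coassoc_apply, C2 (G.φ b), C3 (G.φ b), counit_right_apply]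

theorem main : Glhs G = Frhs G := by
  apply TensorProduct.ext'
  intro a b
  have h1 := cancel G (Frhs G) a b
  have h2 := cancel G (Glhs G) a b
  rw [Ψ_Frhs] at h1
  rw [Ψ_Glhs] at h2
  rw [← h1, ← h2]

end BQGAux

/-- `(id⊗ε) = (εm⊗id)(id⊗σ)(φ⊗id)`. -/
theorem bqg_counit_sigma_right {A : Type*} [Ring A] [Algebra ℂ A] (G : BQG A) :
    (TensorProduct.rid ℂ A).toLinearMap ∘ₗ G.ε.lTensor A
      = (TensorProduct.lid ℂ A).toLinearMap ∘ₗ (G.ε ∘ₗ mA).rTensor A ∘ₗ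
        (TensorProduct.assoc ℂ A A A).symm.toLinearMap ∘ₗ op23 G.σ ∘ₗ G.φ1 :=
  BQGAux.main G
end
end

section
/- In a braided quantum group, the counit satisfies the braided multiplicativity law εm = (ε⊗ε)σ⁻¹τ, where τ is the secondary braiding. -/
open TensorProduct LinearMap

noncomputable section

variable (A : Type*) [Ring A] [Algebra ℂ A]

variable {A}

namespace BQGPf

set_option maxHeartbeats 1600000
set_option synthInstance.maxHeartbeats 400000

variable {A : Type*} [Ring A] [Algebra ℂ A]

/-! Generic plumbing -/

lemma comm_rl {M N P Q' : Type*} [AddCommMonoid M] [AddCommMonoid N] [AddCommMonoid P]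
    [AddCommMonoid Q'] [Module ℂ M] [Module ℂ N] [Module ℂ P] [Module ℂ Q']
    (f : M →ₗ[ℂ] P) (g : N →ₗ[ℂ] Q') :
    f.rTensor Q' ∘ₗ LinearMap.lTensor M g = LinearMap.lTensor P g ∘ₗ f.rTensor N := by
  rw [rTensor_comp_lTensor, lTensor_comp_rTensor]

lemma comm_rl_apply {M N P Q' : Type*} [AddCommMonoid M] [AddCommMonoid N] [AddCommMonoid P]
    [AddCommMonoid Q'] [Module ℂ M] [Module ℂ N] [Module ℂ P] [Module ℂ Q']
    (f : M →ₗ[ℂ] P) (g : N →ₗ[ℂ] Q') (x : M ⊗[ℂ] N) :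
    f.rTensor Q' (LinearMap.lTensor M g x) = LinearMap.lTensor P g (f.rTensor N x) := by
  have h := LinearMap.congr_fun (comm_rl f g) x
  simp only [LinearMap.coe_comp, Function.comp_apply] at h
  exact h

variable (G : BQG A)

/-! Auxiliary maps -/

def qq : T3 A →ₗ[ℂ] A :=
  (TensorProduct.rid ℂ A).toLinearMap ∘ₗ (G.ε ∘ₗ mA).lTensor A

def Psi : T2 A →ₗ[ℂ] T4 A :=
  (TensorProduct.assoc ℂ A A (T2 A)).toLinearMap ∘ₗ G.φ.rTensor (T2 A) ∘ₗ G.φ.lTensor A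

def G3 : T3 A →ₗ[ℂ] A := qq G ∘ₗ op12 G.σ

def Mmap : T3 A →ₗ[ℂ] T4 A :=
  ((TensorProduct.assoc ℂ A A A).toLinearMap ∘ₗ G.φ.rTensor A).lTensor A

def Q : T2 A →ₗ[ℂ] T2 A := G.ε3l ∘ₗ op12 G.σ ∘ₗ G.φ2

def Vh : T2 A →ₗ[ℂ] T2 A := G.ε3r ∘ₗ op23 G.σ ∘ₗ G.φ1

def nu' : T2 A →ₗ[ℂ] ℂ := G.εε ∘ₗ G.σ'

def g1 : T2 A →ₗ[ℂ] A := (TensorProduct.lid ℂ A).toLinearMap ∘ₗ G.ε.rTensor A ∘ₗ G.σ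

def g'm : T2 A →ₗ[ℂ] A := (TensorProduct.lid ℂ A).toLinearMap ∘ₗ G.ε.rTensor A ∘ₗ G.σ'

def C34 : T4 A →ₗ[ℂ] T2 A :=
  ((TensorProduct.rid ℂ A).toLinearMap ∘ₗ (nu' G).lTensor A).lTensor A

def Lam : T4 A →ₗ[ℂ] T3 A :=
  (g1 G).rTensor (T2 A) ∘ₗ (TensorProduct.assoc ℂ A A (T2 A)).symm.toLinearMap

def Q12 : T4 A →ₗ[ℂ] T4 A :=
  (TensorProduct.assoc ℂ A A (T2 A)).toLinearMap ∘ₗ (Q G).rTensor (T2 A) ∘ₗ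
    (TensorProduct.assoc ℂ A A (T2 A)).symm.toLinearMap

def ec1 : T4 A →ₗ[ℂ] T3 A :=
  (TensorProduct.lid ℂ (T3 A)).toLinearMap ∘ₗ G.ε.rTensor (T3 A)

/-! Evaluation helpers (inductions over an unknown tensor slot) -/

lemma hE3lAssoc (S : T2 A) (c : A) :
    G.ε3l ((TensorProduct.assoc ℂ A A A) (S ⊗ₜ[ℂ] c))
      = ((TensorProduct.lid ℂ A) ((G.ε.rTensor A) S)) ⊗ₜ[ℂ] c := by
  induction S using TensorProduct.induction_on with
  | zero => simp only [TensorProduct.zero_tmul, map_zero]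
  | tmul x y => simp [BQG.ε3l, TensorProduct.smul_tmul']
  | add u v hu hv => simp only [TensorProduct.add_tmul, map_add, hu, hv]

lemma hE3rAssoc (S : T2 A) (c : A) :
    G.ε3r ((TensorProduct.assoc ℂ A A A) (S ⊗ₜ[ℂ] c)) = G.ε c • S := by
  induction S using TensorProduct.induction_on with
  | zero => simp only [TensorProduct.zero_tmul, map_zero, smul_zero]
  | tmul x y => simp [BQG.ε3r, TensorProduct.tmul_smul]
  | add u v hu hv => simp only [TensorProduct.add_tmul, map_add, hu, hv, smul_add]

lemma hRLAssoc (S : T2 A) (b : A) :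
    (((TensorProduct.lid ℂ A).toLinearMap ∘ₗ G.ε.rTensor A).lTensor A)
        ((TensorProduct.assoc ℂ A A A) (S ⊗ₜ[ℂ] b))
      = ((TensorProduct.rid ℂ A) ((G.ε.lTensor A) S)) ⊗ₜ[ℂ] b := by
  induction S using TensorProduct.induction_on with
  | zero => simp only [TensorProduct.zero_tmul, map_zero]
  | tmul x y => simp [TensorProduct.smul_tmul', TensorProduct.tmul_smul]
  | add u v hu hv => simp only [TensorProduct.add_tmul, map_add, hu, hv]

lemma hC34Assoc (S t : T2 A) :
    C34 G ((TensorProduct.assoc ℂ A A (T2 A)) (S ⊗ₜ[ℂ] t)) = nu' G t • S := by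
  induction S using TensorProduct.induction_on with
  | zero => simp only [TensorProduct.zero_tmul, map_zero, smul_zero]
  | tmul x y => simp [C34, TensorProduct.tmul_smul]
  | add u v hu hv => simp only [TensorProduct.add_tmul, map_add, hu, hv, smul_add]

lemma hREEAssoc (P : T2 A) (c : A) :
    (TensorProduct.rid ℂ A) ((G.εε.lTensor A) ((TensorProduct.assoc ℂ A A A) (P ⊗ₜ[ℂ] c)))
      = G.ε c • (TensorProduct.rid ℂ A) (G.ε.lTensor A P) := by
  induction P using TensorProduct.induction_on with
  | zero => simp only [TensorProduct.zero_tmul, map_zero, smul_zero]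
  | tmul x y =>
      simp [BQG.εε, smul_smul, mul_comm]
  | add u v hu hv => simp only [TensorProduct.add_tmul, map_add, hu, hv, smul_add]

lemma hEc4Assoc (S : T2 A) (c d : A) :
    (G.ε3r.lTensor A) ((TensorProduct.assoc ℂ A A (T2 A)) (S ⊗ₜ[ℂ] (c ⊗ₜ[ℂ] d)))
      = (TensorProduct.assoc ℂ A A A) (S ⊗ₜ[ℂ] (G.ε d • c)) := by
  induction S using TensorProduct.induction_on with
  | zero => simp only [TensorProduct.zero_tmul, map_zero]
  | tmul x y => simp [BQG.ε3r, TensorProduct.tmul_smul]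
  | add u v hu hv => simp only [TensorProduct.add_tmul, map_add, hu, hv]

/-! Easy structural lemmas -/

lemma hC1 : (TensorProduct.lid ℂ A).toLinearMap ∘ₗ G.ε.rTensor A
    = mA ∘ₗ (Algebra.linearMap ℂ A ∘ₗ G.ε).rTensor A := by
  apply TensorProduct.ext'
  intro a b
  simp [mA, Algebra.smul_def]

lemma hC1_apply (t : T2 A) :
    (TensorProduct.lid ℂ A) (G.ε.rTensor A t)
      = mA ((Algebra.linearMap ℂ A ∘ₗ G.ε).rTensor A t) := by
  have := LinearMap.congr_fun (hC1 G) t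
  simpa using this

lemma hMassoc : (mA : T2 A →ₗ[ℂ] A) ∘ₗ (mA (A := A)).rTensor A
    = mA ∘ₗ (mA (A := A)).lTensor A ∘ₗ (TensorProduct.assoc ℂ A A A).toLinearMap := by
  ext a b c
  simp [mA, mul_assoc]

lemma hNatKappa : (TensorProduct.assoc ℂ A A A).toLinearMap ∘ₗ (G.κ.rTensor A).rTensor A
    = G.κ.rTensor (T2 A) ∘ₗ (TensorProduct.assoc ℂ A A A).toLinearMap := by
  ext a b c
  simp

lemma hPL2 : (mA : T2 A →ₗ[ℂ] A) ∘ₗ G.κ.rTensor A ∘ₗ (mA (A := A)).lTensor A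
    = mA ∘ₗ (mA ∘ₗ G.κ.rTensor A).rTensor A ∘ₗ (TensorProduct.assoc ℂ A A A).symm.toLinearMap := by
  ext a b c
  simp [mA, mul_assoc]

lemma hNatG3 : (TensorProduct.assoc ℂ A A A).symm.toLinearMap ∘ₗ ((G3 G).lTensor A).lTensor A
    = LinearMap.lTensor (T2 A) (G3 G) ∘ₗ (TensorProduct.assoc ℂ A A (T3 A)).symm.toLinearMap := by
  ext a b t
  simp

lemma hE3lLT (f : T2 A →ₗ[ℂ] T2 A) : G.ε3l ∘ₗ f.lTensor A = f ∘ₗ G.ε3l := by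
  ext a b c
  simp [BQG.ε3l]

lemma hE3lPhi1 : G.ε3l ∘ₗ G.φ1 = LinearMap.id := by
  apply TensorProduct.ext'
  intro a b
  have hcl := LinearMap.congr_fun G.counit_left a
  simp only [LinearMap.coe_comp, Function.comp_apply, LinearMap.id_coe, id_eq,
    LinearEquiv.coe_coe] at hcl
  simp only [BQG.φ1, LinearMap.coe_comp, Function.comp_apply, LinearEquiv.coe_coe,
    rTensor_tmul, LinearMap.id_coe, id_eq]
  rw [hE3lAssoc, hcl]

lemma hE3rPhi2 : G.ε3r ∘ₗ G.φ2 = LinearMap.id := by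
  apply TensorProduct.ext'
  intro a b
  have hcr := LinearMap.congr_fun G.counit_right b
  simp only [LinearMap.coe_comp, Function.comp_apply, LinearMap.id_coe, id_eq,
    LinearEquiv.coe_coe] at hcr
  simp only [BQG.φ2, BQG.ε3r, LinearMap.coe_comp, Function.comp_apply, LinearEquiv.coe_coe,
    lTensor_tmul, LinearMap.id_coe, id_eq]
  rw [hcr]

lemma hE3rOp12 (f : T2 A →ₗ[ℂ] T2 A) : G.ε3r ∘ₗ op12 f = f ∘ₗ G.ε3r := by
  ext a b c
  simp only [op12, BQG.ε3r, LinearMap.coe_comp, Function.comp_apply,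
    AlgebraTensorModule.curry_apply, curry_apply, LinearMap.coe_restrictScalars,
    LinearEquiv.coe_coe, assoc_symm_tmul, rTensor_tmul, lTensor_tmul]
  have h1 : ((TensorProduct.rid ℂ A).toLinearMap ∘ₗ G.ε.lTensor A).lTensor A
      ((TensorProduct.assoc ℂ A A A) (f (a ⊗ₜ[ℂ] b) ⊗ₜ[ℂ] c)) = G.ε c • f (a ⊗ₜ[ℂ] b) := by
    have := hE3rAssoc G (f (a ⊗ₜ[ℂ] b)) c
    simpa [BQG.ε3r] using this
  rw [h1]
  simp [map_smul]

lemma hE3rPhi1 : G.ε3r ∘ₗ G.φ1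
    = G.φ ∘ₗ (TensorProduct.rid ℂ A).toLinearMap ∘ₗ G.ε.lTensor A := by
  apply TensorProduct.ext'
  intro a b
  simp only [BQG.φ1, LinearMap.coe_comp, Function.comp_apply, LinearEquiv.coe_coe,
    rTensor_tmul, lTensor_tmul, rid_tmul]
  rw [hE3rAssoc]
  simp [map_smul]

lemma hEc4Op12_4 (f : T2 A →ₗ[ℂ] T2 A) :
    (G.ε3r).lTensor A ∘ₗ op12_4 f = op12 f ∘ₗ (G.ε3r).lTensor A := by
  ext a b c d
  simp only [op12_4, op12, LinearMap.coe_comp, Function.comp_apply,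
    AlgebraTensorModule.curry_apply, curry_apply, LinearMap.coe_restrictScalars,
    LinearEquiv.coe_coe, assoc_symm_tmul, rTensor_tmul, lTensor_tmul]
  rw [hEc4Assoc]
  simp [BQG.ε3r, map_smul]

lemma hNuSigma : nu' G ∘ₗ G.σ = G.εε := by
  rw [nu', LinearMap.comp_assoc, G.comp_σ, LinearMap.comp_id]

lemma hOp12_4Inv : op12_4 G.σ' ∘ₗ op12_4 G.σ = (LinearMap.id : T4 A →ₗ[ℂ] T4 A) := by
  apply LinearMap.ext; intro t
  simp only [op12_4, LinearMap.coe_comp, Function.comp_apply, LinearEquiv.coe_coe,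
    LinearEquiv.symm_apply_apply, LinearMap.id_coe, id_eq]
  rw [← LinearMap.comp_apply (G.σ'.rTensor _) (G.σ.rTensor _), ← LinearMap.rTensor_comp,
    G.comp_σ, LinearMap.rTensor_id]
  simp

lemma hTail : ((TensorProduct.lid ℂ A).toLinearMap ∘ₗ G.ε.rTensor A).lTensor A ∘ₗ G.φ1
    = LinearMap.id := by
  apply TensorProduct.ext'
  intro a b
  have hcr := LinearMap.congr_fun G.counit_right a
  simp only [LinearMap.coe_comp, Function.comp_apply, LinearMap.id_coe, id_eq,
    LinearEquiv.coe_coe] at hcr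
  simp only [BQG.φ1, LinearMap.coe_comp, Function.comp_apply, LinearEquiv.coe_coe,
    rTensor_tmul, LinearMap.id_coe, id_eq]
  rw [hRLAssoc, hcr]

lemma hLidG3 : (TensorProduct.lid ℂ A).toLinearMap ∘ₗ G.ε.rTensor A ∘ₗ
      LinearMap.lTensor A (G3 G) = G3 G ∘ₗ ec1 G := by
  ext a t
  simp [ec1, map_smul]

/-! hPL1 and consequences of `comul_mul` -/

lemma hPL1 : (TensorProduct.rid ℂ A).toLinearMap ∘ₗ G.ε.lTensor A ∘ₗ mm
    = mA ∘ₗ (qq G).lTensor A := by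
  ext a b c d
  simp [mm, m12, mA, qq, mul_smul_comm, smul_mul_assoc]

lemma hVI : (mA : T2 A →ₗ[ℂ] A) = mA ∘ₗ (G3 G).lTensor A ∘ₗ Psi G := by
  apply LinearMap.ext; intro t
  have hcr := LinearMap.congr_fun G.counit_right (mA t)
  simp only [LinearMap.coe_comp, Function.comp_apply, LinearMap.id_coe, id_eq,
    LinearEquiv.coe_coe] at hcr
  have hcm := LinearMap.congr_fun G.comul_mul t
  simp only [LinearMap.coe_comp, Function.comp_apply, LinearEquiv.coe_coe] at hcm
  have hpl1 := LinearMap.congr_fun (hPL1 G)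
      ((op23_4 G.σ) ((TensorProduct.assoc ℂ A A (T2 A))
        ((G.φ.rTensor (T2 A)) ((G.φ.lTensor A) t))))
  simp only [LinearMap.coe_comp, Function.comp_apply, LinearEquiv.coe_coe] at hpl1
  have hop : (qq G).lTensor A ∘ₗ op23_4 G.σ = (G3 G).lTensor A := by
    rw [op23_4, ← LinearMap.lTensor_comp, G3]
  have hop' := LinearMap.congr_fun hop ((TensorProduct.assoc ℂ A A (T2 A))
        ((G.φ.rTensor (T2 A)) ((G.φ.lTensor A) t)))
  simp only [LinearMap.coe_comp, Function.comp_apply] at hop'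
  simp only [LinearMap.coe_comp, Function.comp_apply, Psi, LinearEquiv.coe_coe]
  rw [← hop', ← hpl1, ← hcm, hcr]

/-! hPL3 (coassociativity step) and hPL4 -/

lemma hPL3 : (Psi G).lTensor A ∘ₗ G.φ1
    = (TensorProduct.assoc ℂ A A (T3 A)).toLinearMap ∘ₗ G.φ.rTensor (T3 A) ∘ₗ Psi G := by
  apply TensorProduct.ext'
  intro a b
  -- abbreviations
  set LL2 : T3 A →ₗ[ℂ] A ⊗[ℂ] T4 A :=
    LinearMap.lTensor A ((TensorProduct.assoc ℂ A A (T2 A)).toLinearMap ∘ₗ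
      (TensorProduct.mk ℂ (T2 A) (T2 A)).flip (G.φ b)) with hLL2def
  set LL : (T2 A) ⊗[ℂ] A →ₗ[ℂ] A ⊗[ℂ] T4 A :=
    (TensorProduct.assoc ℂ A A (T3 A)).toLinearMap ∘ₗ
      LinearMap.lTensor (T2 A) ((TensorProduct.mk ℂ A (T2 A)).flip (G.φ b)) with hLLdef
  have claimL : ∀ P : T2 A,
      (Psi G).lTensor A ((TensorProduct.assoc ℂ A A A) (P ⊗ₜ[ℂ] b))
        = LL2 ((G.φ.lTensor A) P) := by
    intro P
    induction P using TensorProduct.induction_on with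
    | zero => simp only [TensorProduct.zero_tmul, map_zero]
    | tmul p q =>
        simp [hLL2def, Psi, TensorProduct.mk_apply, LinearMap.flip_apply]
    | add u v hu hv => simp only [TensorProduct.add_tmul, map_add, hu, hv]
  have claimR : ∀ P : T2 A,
      (TensorProduct.assoc ℂ A A (T3 A)) ((G.φ.rTensor (T3 A))
          ((TensorProduct.assoc ℂ A A (T2 A)) (P ⊗ₜ[ℂ] (G.φ b))))
        = LL ((G.φ.rTensor A) P) := by
    intro P
    induction P using TensorProduct.induction_on with
    | zero => simp only [TensorProduct.zero_tmul, map_zero]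
    | tmul p q =>
        simp [hLLdef, TensorProduct.mk_apply, LinearMap.flip_apply]
    | add u v hu hv => simp only [TensorProduct.add_tmul, map_add, hu, hv]
  have glue : LL2 ∘ₗ (TensorProduct.assoc ℂ A A A).toLinearMap = LL := by
    ext x y z
    simp [hLL2def, hLLdef, TensorProduct.mk_apply, LinearMap.flip_apply]
  have hco := LinearMap.congr_fun G.coassoc a
  simp only [LinearMap.coe_comp, Function.comp_apply, LinearEquiv.coe_coe] at hco
  have glue' := LinearMap.congr_fun glue ((G.φ.rTensor A) (G.φ a))
  simp only [LinearMap.coe_comp, Function.comp_apply, LinearEquiv.coe_coe] at glue'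
  simp only [LinearMap.coe_comp, Function.comp_apply, LinearEquiv.coe_coe, BQG.φ1,
    rTensor_tmul, Psi, lTensor_tmul]
  calc (Psi G).lTensor A ((TensorProduct.assoc ℂ A A A) ((G.φ a) ⊗ₜ[ℂ] b))
      = LL2 ((G.φ.lTensor A) (G.φ a)) := claimL (G.φ a)
    _ = LL2 ((TensorProduct.assoc ℂ A A A) ((G.φ.rTensor A) (G.φ a))) := by rw [hco]
    _ = LL ((G.φ.rTensor A) (G.φ a)) := glue'
    _ = (TensorProduct.assoc ℂ A A (T3 A)) ((G.φ.rTensor (T3 A))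
          ((TensorProduct.assoc ℂ A A (T2 A)) ((G.φ a) ⊗ₜ[ℂ] (G.φ b)))) := (claimR (G.φ a)).symm
    _ = _ := by simp [Psi]

lemma hEc1AssocT2 : ec1 G ∘ₗ (TensorProduct.assoc ℂ A A (T2 A)).toLinearMap
    = ((TensorProduct.lid ℂ A).toLinearMap ∘ₗ G.ε.rTensor A).rTensor (T2 A) := by
  ext a b t
  simp [ec1, TensorProduct.smul_tmul']

lemma hPL4 : ec1 G ∘ₗ Psi G = G.φ2 := by
  have h1 : ec1 G ∘ₗ Psi G
      = (((TensorProduct.lid ℂ A).toLinearMap ∘ₗ G.ε.rTensor A).rTensor (T2 A)) ∘ₗ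
          G.φ.rTensor (T2 A) ∘ₗ G.φ.lTensor A := by
    simp only [Psi, ← LinearMap.comp_assoc]
    rw [hEc1AssocT2]
  rw [h1, ← LinearMap.comp_assoc, ← LinearMap.rTensor_comp]
  have h2 : ((TensorProduct.lid ℂ A).toLinearMap ∘ₗ G.ε.rTensor A) ∘ₗ G.φ
      = LinearMap.id := by
    rw [LinearMap.comp_assoc]; exact G.counit_left
  rw [h2, LinearMap.rTensor_id, LinearMap.id_comp, BQG.φ2]

/-! hK1 -/

lemma hK1 : qq G ∘ₗ op12 G.σ ∘ₗ G.φ2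
    = (TensorProduct.lid ℂ A).toLinearMap ∘ₗ G.ε.rTensor A := by
  apply LinearMap.ext; intro t
  -- notation-free pointwise chain
  have s0 : (TensorProduct.lid ℂ A) (G.ε.rTensor A t)
      = mA ((mA ∘ₗ G.κ.rTensor A ∘ₗ G.φ).rTensor A t) := by
    rw [hC1_apply]
    rw [G.antipode_left]
  have s1 : (mA ∘ₗ G.κ.rTensor A ∘ₗ G.φ).rTensor A t
      = (mA (A := A)).rTensor A ((G.κ.rTensor A).rTensor A ((G.φ.rTensor A) t)) := by
    rw [LinearMap.rTensor_comp, LinearMap.rTensor_comp]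
    simp only [LinearMap.coe_comp, Function.comp_apply]
  have s2 := LinearMap.congr_fun (hMassoc (A := A))
      ((G.κ.rTensor A).rTensor A ((G.φ.rTensor A) t))
  simp only [LinearMap.coe_comp, Function.comp_apply, LinearEquiv.coe_coe] at s2
  have s3 := LinearMap.congr_fun (hNatKappa G) ((G.φ.rTensor A) t)
  simp only [LinearMap.coe_comp, Function.comp_apply, LinearEquiv.coe_coe] at s3
  -- substitute hVI inside lTensor
  have s4 : (mA (A := A)).lTensor A = ((mA : T2 A →ₗ[ℂ] A) ∘ₗ (G3 G).lTensor A ∘ₗ Psi G).lTensor A := by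
    rw [← hVI]
  have s4' : ∀ u : T3 A, (mA (A := A)).lTensor A u
      = (mA (A := A)).lTensor A (((G3 G).lTensor A).lTensor A ((Psi G).lTensor A u)) := by
    intro u
    conv_lhs => rw [s4]
    rw [LinearMap.lTensor_comp, LinearMap.lTensor_comp]
    simp only [LinearMap.coe_comp, Function.comp_apply]
  -- commute κ through lTensor maps
  have c1 : ∀ v : T3 A, (Psi G).lTensor A (G.κ.rTensor (T2 A) v)
      = G.κ.rTensor (T4 A) ((Psi G).lTensor A v) := by
    intro v; exact (comm_rl_apply G.κ (Psi G) v).symm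
  have c2 : ∀ w, ((G3 G).lTensor A).lTensor A (G.κ.rTensor (T4 A) w)
      = G.κ.rTensor (T2 A) (((G3 G).lTensor A).lTensor A w) := by
    intro w; exact (comm_rl_apply G.κ ((G3 G).lTensor A) w).symm
  have c3 : ∀ z, (mA (A := A)).lTensor A (G.κ.rTensor (T2 A) z)
      = G.κ.rTensor A ((mA (A := A)).lTensor A z) := by
    intro z; exact (comm_rl_apply G.κ (mA (A := A)) z).symm
  have s5 := LinearMap.congr_fun (hPL2 G)
      (((G3 G).lTensor A).lTensor A ((Psi G).lTensor A ((G.φ1) t)))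
  simp only [LinearMap.coe_comp, Function.comp_apply, LinearEquiv.coe_coe] at s5
  have s6 := LinearMap.congr_fun (hNatG3 G) ((Psi G).lTensor A ((G.φ1) t))
  simp only [LinearMap.coe_comp, Function.comp_apply, LinearEquiv.coe_coe] at s6
  have s7 : ∀ w, (mA ∘ₗ G.κ.rTensor A).rTensor A (LinearMap.lTensor (T2 A) (G3 G) w)
      = LinearMap.lTensor A (G3 G) ((mA ∘ₗ G.κ.rTensor A).rTensor (T3 A) w) := by
    intro w; exact comm_rl_apply (mA ∘ₗ G.κ.rTensor A) (G3 G) w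
  have s8 := LinearMap.congr_fun (hPL3 G) t
  simp only [LinearMap.coe_comp, Function.comp_apply, LinearEquiv.coe_coe] at s8
  have s9 : (TensorProduct.assoc ℂ A A (T3 A)).symm ((Psi G).lTensor A ((G.φ1) t))
      = (G.φ.rTensor (T3 A)) (Psi G t) := by
    rw [s8]; exact (TensorProduct.assoc ℂ A A (T3 A)).symm_apply_apply _
  have s10 : (mA ∘ₗ G.κ.rTensor A).rTensor (T3 A) ((G.φ.rTensor (T3 A)) (Psi G t))
      = ((mA ∘ₗ G.κ.rTensor A ∘ₗ G.φ)).rTensor (T3 A) (Psi G t) := by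
    have hg : (mA ∘ₗ G.κ.rTensor A ∘ₗ G.φ) = (mA ∘ₗ G.κ.rTensor A) ∘ₗ G.φ := by
      rw [LinearMap.comp_assoc]
    conv_rhs => rw [hg, LinearMap.rTensor_comp]
    simp only [LinearMap.coe_comp, Function.comp_apply]
  have s11 : ((mA ∘ₗ G.κ.rTensor A ∘ₗ G.φ)).rTensor (T3 A) (Psi G t)
      = ((Algebra.linearMap ℂ A ∘ₗ G.ε)).rTensor (T3 A) (Psi G t) := by
    rw [G.antipode_left]
  have s12 : ∀ w, LinearMap.lTensor A (G3 G) (((Algebra.linearMap ℂ A ∘ₗ G.ε)).rTensor (T3 A) w)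
      = ((Algebra.linearMap ℂ A ∘ₗ G.ε)).rTensor A (LinearMap.lTensor A (G3 G) w) := by
    intro w; exact (comm_rl_apply (Algebra.linearMap ℂ A ∘ₗ G.ε) (G3 G) w).symm
  have s13 := (hC1_apply G (LinearMap.lTensor A (G3 G) (Psi G t))).symm
  have s14 := LinearMap.congr_fun (hLidG3 G) (Psi G t)
  simp only [LinearMap.coe_comp, Function.comp_apply, LinearEquiv.coe_coe] at s14
  have s15 := LinearMap.congr_fun (hPL4 G) t
  simp only [LinearMap.coe_comp, Function.comp_apply] at s15
  -- assemble
  simp only [LinearMap.coe_comp, Function.comp_apply, LinearEquiv.coe_coe]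
  rw [s0, s1, s2, s3]
  -- now : goal has mA (mA.lTensor A (G.κ.rTensor (T2 A) (assoc (φ.rT t))))
  have hφ1 : (TensorProduct.assoc ℂ A A A) ((G.φ.rTensor A) t) = G.φ1 t := by
    simp [BQG.φ1]
  rw [hφ1]
  rw [s4' (G.κ.rTensor (T2 A) (G.φ1 t))]
  rw [c1, c2, c3]
  rw [s5, s6]
  rw [s7, s9, s10, s11, s12]
  rw [s13, s14, s15]
  simp only [G3, LinearMap.coe_comp, Function.comp_apply]

/-! Step A and related -/

lemma hEmE3l : G.ε ∘ₗ mA ∘ₗ G.ε3l = G.ε ∘ₗ qq G := by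
  ext a b c
  simp [BQG.ε3l, qq, mA, smul_eq_mul, mul_comm]

lemma hEpsLid : G.ε ∘ₗ (TensorProduct.lid ℂ A).toLinearMap ∘ₗ G.ε.rTensor A = G.εε := by
  ext a b
  simp [BQG.εε, smul_eq_mul]

lemma hStepA : G.ε ∘ₗ mA ∘ₗ Q G = G.εε := by
  apply LinearMap.ext; intro t
  have h1 := LinearMap.congr_fun (hEmE3l G) ((op12 G.σ) (G.φ2 t))
  simp only [LinearMap.coe_comp, Function.comp_apply] at h1
  have h2 := LinearMap.congr_fun (hK1 G) t
  simp only [LinearMap.coe_comp, Function.comp_apply, LinearEquiv.coe_coe] at h2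
  have h3 := LinearMap.congr_fun (hEpsLid G) t
  simp only [LinearMap.coe_comp, Function.comp_apply, LinearEquiv.coe_coe] at h3
  simp only [Q, LinearMap.coe_comp, Function.comp_apply]
  rw [h1, h2, h3]

/-! hM4 and consequences -/

lemma hEc4M : (G.ε3r).lTensor A ∘ₗ Mmap G = G.φ2 ∘ₗ G.ε3r := by
  ext a b c
  simp only [Mmap, BQG.φ2, BQG.ε3r, LinearMap.coe_comp, Function.comp_apply,
    AlgebraTensorModule.curry_apply, curry_apply, LinearMap.coe_restrictScalars,
    LinearEquiv.coe_coe, lTensor_tmul, rTensor_tmul]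
  have h := hE3rAssoc G (G.φ b) c
  simp only [BQG.ε3r] at h
  rw [h]
  simp [map_smul, TensorProduct.tmul_smul]

lemma hM4 : op12 G.σ ∘ₗ G.φ2 ∘ₗ G.σ' = (Vh G ∘ₗ G.σ').lTensor A ∘ₗ G.φ1 := by
  apply LinearMap.ext; intro t
  have hmix := LinearMap.congr_fun G.mixed_coassoc t
  simp only [LinearMap.coe_comp, Function.comp_apply, LinearEquiv.coe_coe] at hmix
  -- fold axiom's middle map into Mmap, φ1, φ2
  have hMfold : ((TensorProduct.assoc ℂ A A A).toLinearMap ∘ₗ G.φ.rTensor A).lTensor A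
      = Mmap G := rfl
  have hφ1fold : (TensorProduct.assoc ℂ A A A).toLinearMap ∘ₗ G.φ.rTensor A = G.φ1 := rfl
  have hφ2fold : G.φ.lTensor A = G.φ2 := rfl
  rw [hMfold, hφ2fold] at hmix
  have hφ1t : (TensorProduct.assoc ℂ A A A) ((G.φ.rTensor A) t) = G.φ1 t := rfl
  rw [hφ1t] at hmix
  -- LHS contraction
  have l1 := LinearMap.congr_fun (hEc4Op12_4 G G.σ) ((Mmap G) ((op12 G.σ') (G.φ2 t)))
  simp only [LinearMap.coe_comp, Function.comp_apply] at l1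
  have l2 := LinearMap.congr_fun (hEc4M G) ((op12 G.σ') (G.φ2 t))
  simp only [LinearMap.coe_comp, Function.comp_apply] at l2
  have l3 := LinearMap.congr_fun (hE3rOp12 G G.σ') (G.φ2 t)
  simp only [LinearMap.coe_comp, Function.comp_apply] at l3
  have l4 := LinearMap.congr_fun (hE3rPhi2 G) t
  simp only [LinearMap.coe_comp, Function.comp_apply, LinearMap.id_coe, id_eq] at l4
  -- RHS contraction : (ε3r).lT ∘ op34_4 σ ∘ Mmap ∘ op23 σ' ∘ φ1 = (Vh∘σ').lT ∘ φ1
  have r1 : (G.ε3r).lTensor A ∘ₗ op34_4 G.σ ∘ₗ Mmap G ∘ₗ op23 G.σ'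
      = (Vh G ∘ₗ G.σ').lTensor A := by
    rw [op34_4, op23, Mmap, ← LinearMap.lTensor_comp, ← LinearMap.lTensor_comp,
      ← LinearMap.lTensor_comp]
    rfl
  have r1' := LinearMap.congr_fun r1 (G.φ1 t)
  simp only [LinearMap.coe_comp, Function.comp_apply] at r1'
  -- assemble: apply (ε3r).lTensor A to both sides of hmix
  have hcontr := congrArg ((G.ε3r).lTensor A) hmix
  rw [l1, l2, l3, l4] at hcontr
  rw [r1'] at hcontr
  simp only [LinearMap.coe_comp, Function.comp_apply]
  exact hcontr

lemma hQVh : Q G = Vh G := by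
  have h1 : Q G ∘ₗ G.σ' = Vh G ∘ₗ G.σ' := by
    apply LinearMap.ext; intro t
    have hm := LinearMap.congr_fun (hM4 G) t
    simp only [LinearMap.coe_comp, Function.comp_apply] at hm
    have h2 := LinearMap.congr_fun (hE3lLT G (Vh G ∘ₗ G.σ')) (G.φ1 t)
    simp only [LinearMap.coe_comp, Function.comp_apply] at h2
    have h3 := LinearMap.congr_fun (hE3lPhi1 G) t
    simp only [LinearMap.coe_comp, Function.comp_apply, LinearMap.id_coe, id_eq] at h3
    simp only [Q, LinearMap.coe_comp, Function.comp_apply]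
    rw [hm, h2, h3]
  apply LinearMap.ext; intro u
  have hu := LinearMap.congr_fun G.comp_σ u
  simp only [LinearMap.coe_comp, Function.comp_apply, LinearMap.id_coe, id_eq] at hu
  have h1' := LinearMap.congr_fun h1 (G.σ u)
  simp only [LinearMap.coe_comp, Function.comp_apply] at h1'
  rw [← hu]
  exact h1'

lemma hVhEps : G.ε ∘ₗ mA ∘ₗ Vh G = G.εε := by
  rw [← hQVh]; exact hStepA G

lemma hZ1 : (TensorProduct.rid ℂ A).toLinearMap ∘ₗ (nu' G).lTensor A ∘ₗ G.φ1 = g'm G := by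
  apply LinearMap.ext; intro t
  have hk1 := LinearMap.congr_fun (hK1 G) (G.σ' t)
  simp only [LinearMap.coe_comp, Function.comp_apply, LinearEquiv.coe_coe] at hk1
  have hm4 := LinearMap.congr_fun (hM4 G) t
  simp only [LinearMap.coe_comp, Function.comp_apply] at hm4
  have hmap : (G.ε ∘ₗ mA) ∘ₗ (Vh G ∘ₗ G.σ') = nu' G := by
    have hh : (G.ε ∘ₗ mA) ∘ₗ (Vh G ∘ₗ G.σ') = (G.ε ∘ₗ mA ∘ₗ Vh G) ∘ₗ G.σ' := by
      simp only [LinearMap.comp_assoc]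
    rw [hh, hVhEps, nu']
  have hqq : ∀ u : T3 A, qq G ((Vh G ∘ₗ G.σ').lTensor A u)
      = (TensorProduct.rid ℂ A) ((nu' G).lTensor A u) := by
    intro u
    rw [qq]
    simp only [LinearMap.coe_comp, Function.comp_apply, LinearEquiv.coe_coe]
    rw [← LinearMap.comp_apply ((G.ε ∘ₗ mA).lTensor A), ← LinearMap.lTensor_comp, hmap]
  simp only [g'm, LinearMap.coe_comp, Function.comp_apply, LinearEquiv.coe_coe]
  rw [← hk1, hm4, hqq]

/-! hW2 -/

lemma hW2 : Mmap G ∘ₗ op12 G.σ' ∘ₗ G.φ2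
    = op12_4 G.σ' ∘ₗ op34_4 G.σ ∘ₗ Mmap G ∘ₗ op23 G.σ' ∘ₗ G.φ1 := by
  apply LinearMap.ext; intro t
  have hmix := LinearMap.congr_fun G.mixed_coassoc t
  simp only [LinearMap.coe_comp, Function.comp_apply, LinearEquiv.coe_coe] at hmix
  have hMfold : ((TensorProduct.assoc ℂ A A A).toLinearMap ∘ₗ G.φ.rTensor A).lTensor A
      = Mmap G := rfl
  have hφ1fold : (TensorProduct.assoc ℂ A A A) ((G.φ.rTensor A) t) = G.φ1 t := rfl
  rw [hMfold] at hmix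
  have hinv := LinearMap.congr_fun (hOp12_4Inv G) ((Mmap G) ((op12 G.σ') ((G.φ.lTensor A) t)))
  simp only [LinearMap.coe_comp, Function.comp_apply, LinearMap.id_coe, id_eq] at hinv
  simp only [LinearMap.coe_comp, Function.comp_apply]
  calc Mmap G ((op12 G.σ') (G.φ2 t))
      = (op12_4 G.σ') ((op12_4 G.σ) ((Mmap G) ((op12 G.σ') ((G.φ.lTensor A) t)))) := by
        rw [hinv]; rfl
    _ = (op12_4 G.σ') ((op34_4 G.σ) ((Mmap G) ((op23 G.σ') (G.φ1 t)))) := by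
        rw [hmix]; rfl

/-! C34 lemmas -/

lemma hC34op12 (f : T2 A →ₗ[ℂ] T2 A) : C34 G ∘ₗ op12_4 f = f ∘ₗ C34 G := by
  ext a b c d
  simp only [op12_4, LinearMap.coe_comp, Function.comp_apply,
    AlgebraTensorModule.curry_apply, curry_apply, LinearMap.coe_restrictScalars,
    LinearEquiv.coe_coe, assoc_symm_tmul, rTensor_tmul]
  rw [hC34Assoc]
  have : C34 G (a ⊗ₜ[ℂ] (b ⊗ₜ[ℂ] (c ⊗ₜ[ℂ] d))) = nu' G (c ⊗ₜ[ℂ] d) • (a ⊗ₜ[ℂ] b) := by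
    simp [C34, TensorProduct.tmul_smul]
  rw [this, map_smul]

lemma hC34op34 : C34 G ∘ₗ op34_4 G.σ
    = ((TensorProduct.rid ℂ A).toLinearMap ∘ₗ (G.εε).lTensor A).lTensor A := by
  ext a b c d
  have hns := LinearMap.congr_fun (hNuSigma G) (c ⊗ₜ[ℂ] d)
  simp only [LinearMap.coe_comp, Function.comp_apply] at hns
  simp only [op34_4, C34, LinearMap.coe_comp, Function.comp_apply,
    AlgebraTensorModule.curry_apply, curry_apply, LinearMap.coe_restrictScalars,
    LinearEquiv.coe_coe, lTensor_tmul]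
  rw [hns]

lemma hC34eeM : ((TensorProduct.rid ℂ A).toLinearMap ∘ₗ (G.εε).lTensor A).lTensor A ∘ₗ Mmap G
    = G.ε3r := by
  ext a b c
  have hcr := LinearMap.congr_fun G.counit_right b
  simp only [LinearMap.coe_comp, Function.comp_apply, LinearMap.id_coe, id_eq,
    LinearEquiv.coe_coe] at hcr
  simp only [Mmap, BQG.ε3r, LinearMap.coe_comp, Function.comp_apply,
    AlgebraTensorModule.curry_apply, curry_apply, LinearMap.coe_restrictScalars,
    LinearEquiv.coe_coe, lTensor_tmul, rTensor_tmul]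
  rw [hREEAssoc, hcr]
  simp

lemma hB1 : C34 G ∘ₗ Mmap G ∘ₗ op12 G.σ' ∘ₗ G.φ2
    = G.σ' ∘ₗ G.ε3r ∘ₗ op23 G.σ' ∘ₗ G.φ1 := by
  apply LinearMap.ext; intro t
  have hw2 := LinearMap.congr_fun (hW2 G) t
  simp only [LinearMap.coe_comp, Function.comp_apply] at hw2
  have h1 := LinearMap.congr_fun (hC34op12 G G.σ')
      ((op34_4 G.σ) ((Mmap G) ((op23 G.σ') (G.φ1 t))))
  simp only [LinearMap.coe_comp, Function.comp_apply] at h1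
  have h2 := LinearMap.congr_fun (hC34op34 G) ((Mmap G) ((op23 G.σ') (G.φ1 t)))
  simp only [LinearMap.coe_comp, Function.comp_apply] at h2
  have h3 := LinearMap.congr_fun (hC34eeM G) ((op23 G.σ') (G.φ1 t))
  simp only [LinearMap.coe_comp, Function.comp_apply] at h3
  simp only [LinearMap.coe_comp, Function.comp_apply]
  rw [hw2, h1, h2, h3]

lemma hB2 : Q G ∘ₗ C34 G = C34 G ∘ₗ Q12 G := by
  ext a b c d
  simp only [Q12, LinearMap.coe_comp, Function.comp_apply,
    AlgebraTensorModule.curry_apply, curry_apply, LinearMap.coe_restrictScalars,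
    LinearEquiv.coe_coe, assoc_symm_tmul, rTensor_tmul]
  rw [hC34Assoc]
  have : C34 G (a ⊗ₜ[ℂ] (b ⊗ₜ[ℂ] (c ⊗ₜ[ℂ] d))) = nu' G (c ⊗ₜ[ℂ] d) • (a ⊗ₜ[ℂ] b) := by
    simp [C34, TensorProduct.tmul_smul]
  rw [this, map_smul]

/-! hQeval and hCLQ -/

lemma hQeval (x p : A) :
    Q G (x ⊗ₜ[ℂ] p) = ((g1 G ∘ₗ TensorProduct.mk ℂ A A x).rTensor A) (G.φ p) := by
  have key : ∀ P : T2 A,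
      G.ε3l ((op12 G.σ) (x ⊗ₜ[ℂ] P)) = ((g1 G ∘ₗ TensorProduct.mk ℂ A A x).rTensor A) P := by
    intro P
    induction P using TensorProduct.induction_on with
    | zero => simp only [TensorProduct.tmul_zero, map_zero]
    | tmul p1 p2 =>
        simp only [op12, LinearMap.coe_comp, Function.comp_apply, LinearEquiv.coe_coe,
          assoc_symm_tmul, rTensor_tmul]
        rw [hE3lAssoc]
        simp [g1, TensorProduct.mk_apply]
    | add u v hu hv => simp only [TensorProduct.tmul_add, map_add, hu, hv]
  simp only [Q, BQG.φ2, LinearMap.coe_comp, Function.comp_apply, lTensor_tmul]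
  exact key (G.φ p)

lemma hCLQ : Q12 G ∘ₗ Mmap G = Mmap G ∘ₗ Lam G ∘ₗ Mmap G := by
  ext x y z
  have hco := LinearMap.congr_fun G.coassoc y
  simp only [LinearMap.coe_comp, Function.comp_apply, LinearEquiv.coe_coe] at hco
  -- the common linear map L
  set L : (T2 A) ⊗[ℂ] A →ₗ[ℂ] T4 A :=
    (TensorProduct.assoc ℂ A A (T2 A)).toLinearMap ∘ₗ
      LinearMap.rTensor (T2 A) ((g1 G ∘ₗ TensorProduct.mk ℂ A A x).rTensor A) ∘ₗ
      LinearMap.lTensor (T2 A) ((TensorProduct.mk ℂ A A).flip z) with hLdef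
  have claimL : ∀ P : T2 A,
      Q12 G (x ⊗ₜ[ℂ] ((TensorProduct.assoc ℂ A A A) (P ⊗ₜ[ℂ] z)))
        = L ((G.φ.rTensor A) P) := by
    intro P
    induction P using TensorProduct.induction_on with
    | zero => simp only [TensorProduct.zero_tmul, map_zero, TensorProduct.tmul_zero]
    | tmul p q =>
        simp only [Q12, LinearMap.coe_comp, Function.comp_apply, LinearEquiv.coe_coe,
          assoc_tmul, assoc_symm_tmul, rTensor_tmul, lTensor_tmul, hLdef,
          TensorProduct.mk_apply, LinearMap.flip_apply]
        rw [hQeval]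
    | add u v hu hv =>
        simp only [TensorProduct.add_tmul, map_add, TensorProduct.tmul_add, hu, hv]
  have claimR : ∀ P : T2 A,
      (Mmap G) (Lam G (x ⊗ₜ[ℂ] ((TensorProduct.assoc ℂ A A A) (P ⊗ₜ[ℂ] z))))
        = L ((TensorProduct.assoc ℂ A A A).symm ((G.φ.lTensor A) P)) := by
    intro P
    induction P using TensorProduct.induction_on with
    | zero => simp only [TensorProduct.zero_tmul, map_zero, TensorProduct.tmul_zero]
    | tmul p q =>
        simp only [Lam, Mmap, LinearMap.coe_comp, Function.comp_apply, LinearEquiv.coe_coe,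
          assoc_tmul, assoc_symm_tmul, rTensor_tmul, lTensor_tmul]
        generalize G.φ q = P'
        induction P' using TensorProduct.induction_on with
        | zero => simp only [TensorProduct.zero_tmul, TensorProduct.tmul_zero, map_zero]
        | tmul q1 q2 =>
            simp [hLdef, TensorProduct.mk_apply, LinearMap.flip_apply]
        | add u v hu hv =>
            simp only [TensorProduct.add_tmul, TensorProduct.tmul_add, map_add, hu, hv]
    | add u v hu hv =>
        simp only [TensorProduct.add_tmul, map_add, TensorProduct.tmul_add, hu, hv]
  simp only [Mmap, LinearMap.coe_comp, Function.comp_apply,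
    AlgebraTensorModule.curry_apply, curry_apply, LinearMap.coe_restrictScalars,
    LinearEquiv.coe_coe, lTensor_tmul]
  calc Q12 G (x ⊗ₜ[ℂ] ((TensorProduct.assoc ℂ A A A) ((G.φ.rTensor A) (y ⊗ₜ[ℂ] z))))
      = Q12 G (x ⊗ₜ[ℂ] ((TensorProduct.assoc ℂ A A A) ((G.φ y) ⊗ₜ[ℂ] z))) := by
        simp only [rTensor_tmul]
    _ = L ((G.φ.rTensor A) (G.φ y)) := claimL (G.φ y)
    _ = L ((TensorProduct.assoc ℂ A A A).symm ((G.φ.lTensor A) (G.φ y))) := by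
        rw [← hco, LinearEquiv.symm_apply_apply]
    _ = (Mmap G) (Lam G (x ⊗ₜ[ℂ] ((TensorProduct.assoc ℂ A A A) ((G.φ y) ⊗ₜ[ℂ] z)))) :=
        (claimR (G.φ y)).symm
    _ = _ := by simp only [Mmap, rTensor_tmul, LinearMap.coe_comp, Function.comp_apply,
          LinearEquiv.coe_coe]

/-! hM1' -/

lemma hLamOp12 : Lam G ∘ₗ op12_4 G.σ' = ec1 G := by
  ext a b c d
  have hsc := LinearMap.congr_fun G.σ_comp (a ⊗ₜ[ℂ] b)
  simp only [LinearMap.coe_comp, Function.comp_apply, LinearMap.id_coe, id_eq] at hsc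
  simp only [Lam, op12_4, ec1, LinearMap.coe_comp, Function.comp_apply,
    AlgebraTensorModule.curry_apply, curry_apply, LinearMap.coe_restrictScalars,
    LinearEquiv.coe_coe, assoc_symm_tmul, rTensor_tmul, LinearEquiv.symm_apply_apply]
  rw [g1]
  simp only [LinearMap.coe_comp, Function.comp_apply, LinearEquiv.coe_coe]
  rw [hsc]
  simp [TensorProduct.smul_tmul']

lemma hEc1Op34 (f : T2 A →ₗ[ℂ] T2 A) : ec1 G ∘ₗ op34_4 f = op23 f ∘ₗ ec1 G := by
  ext a b c d
  simp [ec1, op34_4, op23, map_smul]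

lemma hEc1M : ec1 G ∘ₗ Mmap G = G.φ1 ∘ₗ G.ε3l := by
  ext a b c
  simp [ec1, Mmap, BQG.ε3l, BQG.φ1, map_smul]

lemma hM1' : Lam G ∘ₗ Mmap G ∘ₗ op12 G.σ' ∘ₗ G.φ2 = op23 G.σ ∘ₗ G.φ1 ∘ₗ G.σ' := by
  apply LinearMap.ext; intro t
  have hw2 := LinearMap.congr_fun (hW2 G) t
  simp only [LinearMap.coe_comp, Function.comp_apply] at hw2
  have h1 := LinearMap.congr_fun (hLamOp12 G)
      ((op34_4 G.σ) ((Mmap G) ((op23 G.σ') (G.φ1 t))))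
  simp only [LinearMap.coe_comp, Function.comp_apply] at h1
  have h2 := LinearMap.congr_fun (hEc1Op34 G G.σ) ((Mmap G) ((op23 G.σ') (G.φ1 t)))
  simp only [LinearMap.coe_comp, Function.comp_apply] at h2
  have h3 := LinearMap.congr_fun (hEc1M G) ((op23 G.σ') (G.φ1 t))
  simp only [LinearMap.coe_comp, Function.comp_apply] at h3
  have h4 : G.ε3l ((op23 G.σ') (G.φ1 t)) = G.σ' (G.ε3l (G.φ1 t)) := by
    have h4' := LinearMap.congr_fun (hE3lLT G G.σ') (G.φ1 t)
    simp only [LinearMap.coe_comp, Function.comp_apply] at h4'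
    exact h4'
  have h5 := LinearMap.congr_fun (hE3lPhi1 G) t
  simp only [LinearMap.coe_comp, Function.comp_apply, LinearMap.id_coe, id_eq] at h5
  simp only [LinearMap.coe_comp, Function.comp_apply]
  rw [hw2, h1, h2, h3, h4, h5]

/-! hC34M, Step B, and the final assembly -/

lemma hC34M : C34 G ∘ₗ Mmap G
    = ((TensorProduct.rid ℂ A).toLinearMap ∘ₗ (nu' G).lTensor A ∘ₗ G.φ1).lTensor A := by
  ext a b c
  simp [C34, Mmap, BQG.φ1]

lemma hStepB : Q G ∘ₗ G.σ' ∘ₗ G.τ = LinearMap.id := by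
  apply LinearMap.ext; intro t
  have hb1 := LinearMap.congr_fun (hB1 G) (G.σ t)
  simp only [LinearMap.coe_comp, Function.comp_apply] at hb1
  have hb2 := LinearMap.congr_fun (hB2 G) ((Mmap G) ((op12 G.σ') (G.φ2 (G.σ t))))
  simp only [LinearMap.coe_comp, Function.comp_apply] at hb2
  have hclq := LinearMap.congr_fun (hCLQ G) ((op12 G.σ') (G.φ2 (G.σ t)))
  simp only [LinearMap.coe_comp, Function.comp_apply] at hclq
  have hm1 := LinearMap.congr_fun (hM1' G) (G.σ t)
  simp only [LinearMap.coe_comp, Function.comp_apply] at hm1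
  have hc34m := LinearMap.congr_fun (hC34M G) ((op23 G.σ) (G.φ1 (G.σ' (G.σ t))))
  simp only [LinearMap.coe_comp, Function.comp_apply] at hc34m
  have hz1map : ((TensorProduct.rid ℂ A).toLinearMap ∘ₗ (nu' G).lTensor A ∘ₗ G.φ1).lTensor A
      = (g'm G).lTensor A := by rw [hZ1]
  have hgs : g'm G ∘ₗ G.σ = (TensorProduct.lid ℂ A).toLinearMap ∘ₗ G.ε.rTensor A := by
    rw [g'm, LinearMap.comp_assoc, LinearMap.comp_assoc, G.comp_σ, LinearMap.comp_id]
  have hlt : (g'm G).lTensor A ∘ₗ op23 G.σ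
      = ((TensorProduct.lid ℂ A).toLinearMap ∘ₗ G.ε.rTensor A).lTensor A := by
    rw [op23, ← LinearMap.lTensor_comp, hgs]
  have hlt' := LinearMap.congr_fun hlt (G.φ1 (G.σ' (G.σ t)))
  simp only [LinearMap.coe_comp, Function.comp_apply] at hlt'
  have htail := LinearMap.congr_fun (hTail G) (G.σ' (G.σ t))
  simp only [LinearMap.coe_comp, Function.comp_apply, LinearMap.id_coe, id_eq] at htail
  have hcs := LinearMap.congr_fun G.comp_σ t
  simp only [LinearMap.coe_comp, Function.comp_apply, LinearMap.id_coe, id_eq] at hcs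
  -- τ t = ε3r (op23 σ' (φ1 (σ t)))
  have hτ : G.τ t = G.ε3r ((op23 G.σ') (G.φ1 (G.σ t))) := by
    simp [BQG.τ]
  simp only [LinearMap.coe_comp, Function.comp_apply, LinearMap.id_coe, id_eq]
  rw [hτ, ← hb1, hb2, hclq, hm1, hc34m]
  rw [hz1map] at hc34m
  -- recompute with g'm version
  have step : ((TensorProduct.rid ℂ A).toLinearMap ∘ₗ (nu' G).lTensor A ∘ₗ G.φ1).lTensor A
        ((op23 G.σ) (G.φ1 (G.σ' (G.σ t))))
      = G.σ' (G.σ t) := by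
    rw [hz1map, hlt', htail]
  rw [step, hcs]

end BQGPf

/-- Braided multiplicativity of the counit: `εm = (ε⊗ε)σ⁻¹τ`. -/
theorem bqg_counit_braided_mul {A : Type*} [Ring A] [Algebra ℂ A] (G : BQG A) :
    G.ε ∘ₗ mA = G.εε ∘ₗ G.σ' ∘ₗ G.τ := by
  apply LinearMap.ext; intro t
  have hA := LinearMap.congr_fun (BQGPf.hStepA G) (G.σ' (G.τ t))
  simp only [LinearMap.coe_comp, Function.comp_apply] at hA
  have hB := LinearMap.congr_fun (BQGPf.hStepB G) t
  simp only [LinearMap.coe_comp, Function.comp_apply, LinearMap.id_coe, id_eq] at hB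
  simp only [LinearMap.coe_comp, Function.comp_apply]
  rw [← hA, hB]
end
end
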